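/- arXiv:2105.01518 — 6 statements merged into one kernel-verified Lean document; each statement's English description precedes it below -/
import Mathlib

section
/- Let W be the Weyl group of type C_n and i ∈ [n]. A coroot γ^∨ associated with a positive root γ ∈ Δ^+ ∖ Δ_{I∖{i}}^+ satisfies ⟨γ^∨, α⟩ ∈ {−1, 0} for all α ∈ Δ_{I∖{i}}^+ if and only if γ^∨ = ε_i (i.e., γ^∨ = α_i^∨ + α_{i+1}^∨ + ⋯ + α_n^∨) or γ^∨ = ε_{i−1} + ε_i (i.e., γ^∨ = α_{i−1}^∨ + 2α_i^∨ + ⋯ + 2α_n^∨, only when i ≥ 2). -/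
/-- Standard dot product on `ℚ^n` (the `ε_s` form an orthonormal basis). -/
def dotV {n : ℕ} (x y : Fin n → ℚ) : ℚ := ∑ j, x j * y j

/-- The coroot `γ^∨ = 2γ / ⟨γ,γ⟩` of a root `γ`, identified with a vector of `ℚ^n`
via the dot product. -/
def corootV {n : ℕ} (γ : Fin n → ℚ) : Fin n → ℚ := (2 / dotV γ γ) • γ

/-- The positive roots of type `C_n`:
`Δ^+ = {ε_s ± ε_t : s < t} ∪ {2ε_s}` (0-based indices). -/
def posC (n : ℕ) : Set (Fin n → ℚ) :=
  {γ | ∃ s t : Fin n, s < t ∧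
      (γ = Pi.single s 1 - Pi.single t 1 ∨ γ = Pi.single s 1 + Pi.single t 1)} ∪
  {γ | ∃ s : Fin n, γ = (2 : ℚ) • (Pi.single s 1 : Fin n → ℚ)}

/-- The simple roots of type `C_n` (1-based index `j ∈ [n]`):
`α_j = ε_j − ε_{j+1}` for `j < n` and `α_n = 2ε_n`. -/
def alC (n : ℕ) : ℕ → (Fin n → ℚ) := fun j =>
  if h : 1 ≤ j ∧ j < n then
    Pi.single (⟨j - 1, by omega⟩ : Fin n) 1 - Pi.single (⟨j, by omega⟩ : Fin n) 1
  else if h2 : j = n ∧ 1 ≤ n then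
    (2 : ℚ) • (Pi.single (⟨n - 1, by omega⟩ : Fin n) 1 : Fin n → ℚ)
  else 0

/-- The positive roots of `Δ_{I∖{i}}`: positive roots lying in the span of the simple
roots `α_j`, `j ≠ i`. -/
def posCJ (n i : ℕ) : Set (Fin n → ℚ) :=
  {γ ∈ posC n |
    γ ∈ (Submodule.span ℚ (alC n '' {j | 1 ≤ j ∧ j ≤ n ∧ j ≠ i}) : Submodule ℚ (Fin n → ℚ))}

/-!
Indices are the paper's (1-based). Since `⟨ω_i^∨, α_j⟩ = 0` for `j ≠ i`, where
`ω_i^∨ = ε_1 + ⋯ + ε_i`, every `α ∈ Δ_{I∖{i}}^+` is killed by `ω_i^∨`; for a root of type `C_n`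
this means that `α` is either `ε_s - ε_t` with `s < t ≤ i` or is supported on the coordinates
after `i`. Hence a vector `c` supported on the first `i` coordinates pairs into `{-1, 0}` with
all of `Δ_{I∖{i}}^+` as soon as `c_s - c_t ∈ {-1, 0}` for `s < t ≤ i`, which holds for `ε_i` and
`ε_{i-1} + ε_i`. Conversely, pairing `c = γ^∨` with `2ε_t ∈ Δ_{I∖{i}}^+` for `t > i` gives
`|c_t| < 1`, and pairing it with `ε_s - ε_t` for `s < t ≤ i` gives `c_s ≤ c_t`; among the
positive coroots `ε_s ± ε_t`, `ε_s` of type `C_n` only `ε_i` and `ε_{i-1} + ε_i` pass both tests.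
-/

open Matrix

section

variable {n i : ℕ}

lemma dotV_eq_dotProduct (x y : Fin n → ℚ) : dotV x y = x ⬝ᵥ y := rfl

lemma single_one_apply (a b : Fin n) :
    (Pi.single a 1 : Fin n → ℚ) b = if b.val = a.val then 1 else 0 := by
  simp [Pi.single_apply, Fin.ext_iff]

lemma corootV_eq_self {γ : Fin n → ℚ} (h : dotV γ γ = 2) : corootV γ = γ := by
  rw [corootV, h, div_self two_ne_zero, one_smul]

lemma corootV_single_sub_single {s t : Fin n} (hst : s ≠ t) :
    corootV (Pi.single s 1 - Pi.single t 1 : Fin n → ℚ) = Pi.single s 1 - Pi.single t 1 := by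
  apply corootV_eq_self
  norm_num [dotV_eq_dotProduct, hst, hst.symm]

lemma corootV_single_add_single {s t : Fin n} (hst : s ≠ t) :
    corootV (Pi.single s 1 + Pi.single t 1 : Fin n → ℚ) = Pi.single s 1 + Pi.single t 1 := by
  apply corootV_eq_self
  norm_num [dotV_eq_dotProduct, hst, hst.symm]

lemma corootV_two_smul_single (s : Fin n) :
    corootV ((2 : ℚ) • Pi.single s 1 : Fin n → ℚ) = Pi.single s 1 := by
  rw [corootV, dotV_eq_dotProduct, smul_dotProduct, dotProduct_smul, smul_smul]
  norm_num

lemma corootV_cases {γ : Fin n → ℚ} (hγ : γ ∈ posC n) :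
    (∃ s t : Fin n, s < t ∧
      (corootV γ = Pi.single s 1 - Pi.single t 1 ∨ corootV γ = Pi.single s 1 + Pi.single t 1)) ∨
    ∃ s : Fin n, corootV γ = Pi.single s 1 := by
  rcases hγ with ⟨s, t, hst, rfl | rfl⟩ | ⟨s, rfl⟩
  · exact .inl ⟨s, t, hst, .inl (corootV_single_sub_single hst.ne)⟩
  · exact .inl ⟨s, t, hst, .inr (corootV_single_add_single hst.ne)⟩
  · exact .inr ⟨s, corootV_two_smul_single s⟩

lemma alC_of_lt {j : ℕ} (h1 : 1 ≤ j) (h2 : j < n) :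
    alC n j = Pi.single (⟨j - 1, by omega⟩ : Fin n) 1 - Pi.single ⟨j, h2⟩ 1 := by
  rw [alC, dif_pos ⟨h1, h2⟩]

lemma alC_self (h : 1 ≤ n) :
    alC n n = (2 : ℚ) • (Pi.single (⟨n - 1, by omega⟩ : Fin n) 1 : Fin n → ℚ) := by
  rw [alC, dif_neg (by omega), dif_pos ⟨rfl, h⟩]

lemma single_sub_single_mem_span_alC {a b : ℕ} (hab : a ≤ b) (hb : b < n) :
    (Pi.single ⟨a, hab.trans_lt hb⟩ 1 - Pi.single ⟨b, hb⟩ 1 : Fin n → ℚ) ∈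
      Submodule.span ℚ (alC n '' Set.Ioc a b) := by
  induction b, hab using Nat.le_induction with
  | base => simp
  | succ b hab ih =>
    have hstep : alC n (b + 1) = Pi.single ⟨b, by omega⟩ 1 - Pi.single ⟨b + 1, hb⟩ 1 :=
      alC_of_lt (by omega) hb
    rw [← sub_add_sub_cancel _ (Pi.single (⟨b, by omega⟩ : Fin n) 1), ← hstep]
    refine Submodule.add_mem _ (Submodule.span_mono ?_ (ih (by omega))) ?_
    · exact Set.image_mono (Set.Ioc_subset_Ioc_right b.le_succ)
    · exact Submodule.subset_span ⟨b + 1, ⟨by omega, le_rfl⟩, rfl⟩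

lemma single_sub_single_mem_span_alC_ne {a b : ℕ} (hab : a ≤ b) (hb : b < n)
    (hi : i ∉ Set.Ioc a b) :
    (Pi.single ⟨a, hab.trans_lt hb⟩ 1 - Pi.single ⟨b, hb⟩ 1 : Fin n → ℚ) ∈
      Submodule.span ℚ (alC n '' {j | 1 ≤ j ∧ j ≤ n ∧ j ≠ i}) := by
  refine Submodule.span_mono (Set.image_mono ?_) (single_sub_single_mem_span_alC hab hb)
  rintro j ⟨haj, hjb⟩
  exact ⟨by omega, by omega, fun hji => hi (hji ▸ ⟨haj, hjb⟩)⟩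

lemma single_sub_single_mem_posCJ {s t : Fin n} (hst : s < t) (ht : t.val < i) :
    (Pi.single s 1 - Pi.single t 1 : Fin n → ℚ) ∈ posCJ n i :=
  ⟨.inl ⟨s, t, hst, .inl rfl⟩,
    single_sub_single_mem_span_alC_ne hst.le t.isLt (fun h => by simp at h; omega)⟩

lemma two_smul_single_mem_posCJ {t : Fin n} (ht : i ≤ t.val) :
    ((2 : ℚ) • Pi.single t 1 : Fin n → ℚ) ∈ posCJ n i := by
  refine ⟨.inr ⟨t, rfl⟩, ?_⟩
  have hn : 1 ≤ n := by omega
  have htn : t.val ≤ n - 1 := by omega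
  have hchain := single_sub_single_mem_span_alC_ne (n := n) (i := i) htn (by omega)
    (fun h => by simp only [Set.mem_Ioc] at h; omega)
  have hlast : alC n n ∈ Submodule.span ℚ (alC n '' {j | 1 ≤ j ∧ j ≤ n ∧ j ≠ i}) :=
    Submodule.subset_span ⟨n, ⟨hn, le_rfl, by omega⟩, rfl⟩
  rw [alC_self hn] at hlast
  -- `2ε_t = 2(ε_t - ε_n) + α_n`
  simpa [smul_sub] using Submodule.add_mem _ (Submodule.smul_mem _ (2 : ℚ) hchain) hlast

/-- The fundamental coweight `ω_i^∨ = ε_1 + ⋯ + ε_i`. -/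
def fundCoweight (n i : ℕ) : Fin n → ℚ := fun j => if j.val < i then 1 else 0

lemma fundCoweight_dotProduct_alC {j : ℕ} (hi : i ≤ n) (hj : j ≠ i) :
    fundCoweight n i ⬝ᵥ alC n j = 0 := by
  unfold alC
  split_ifs with h1 h2
  · simp only [dotProduct_sub, dotProduct_single, fundCoweight]
    split_ifs <;> simp <;> omega
  · simp only [dotProduct_smul, dotProduct_single, fundCoweight]
    rw [if_neg (by omega), zero_mul, smul_zero]
  · simp

lemma fundCoweight_dotProduct_eq_zero_of_mem_span (hi : i ≤ n) {x : Fin n → ℚ}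
    (hx : x ∈ Submodule.span ℚ (alC n '' {j | 1 ≤ j ∧ j ≤ n ∧ j ≠ i})) :
    fundCoweight n i ⬝ᵥ x = 0 := by
  induction hx using Submodule.span_induction with
  | mem x hx =>
    obtain ⟨j, ⟨-, -, hj⟩, rfl⟩ := hx
    exact fundCoweight_dotProduct_alC hi hj
  | zero => simp
  | add x y _ _ hx hy => simp [dotProduct_add, hx, hy]
  | smul c x _ hx => simp [dotProduct_smul, hx]

lemma mem_posCJ_cases (hi : i ≤ n) {α : Fin n → ℚ} (hα : α ∈ posCJ n i) :
    (∃ s t : Fin n, s < t ∧ t.val < i ∧ α = Pi.single s 1 - Pi.single t 1) ∨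
      ∀ j : Fin n, j.val < i → α j = 0 := by
  have hω := fundCoweight_dotProduct_eq_zero_of_mem_span hi hα.2
  rcases hα.1 with ⟨s, t, hst, rfl | rfl⟩ | ⟨s, rfl⟩
  · by_cases ht : t.val < i
    · exact .inl ⟨s, t, hst, ht, rfl⟩
    have hs : ¬ s.val < i := fun hs => by
      simp [dotProduct_sub, fundCoweight, hs, ht] at hω
    refine .inr fun j hj => ?_
    simp [Fin.ext_iff, show j.val ≠ s.val by omega, show j.val ≠ t.val by omega]
  · have hs : ¬ s.val < i := fun hs => by
      simp only [dotProduct_add, dotProduct_single, fundCoweight, hs, if_true, mul_one] at hω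
      split_ifs at hω <;> norm_num at hω
    have ht : ¬ t.val < i := fun ht => by
      simp [dotProduct_add, fundCoweight, hs, ht] at hω
    refine .inr fun j hj => ?_
    simp [Fin.ext_iff, show j.val ≠ s.val by omega, show j.val ≠ t.val by omega]
  · have hs : ¬ s.val < i := fun hs => by
      simp [dotProduct_smul, fundCoweight, hs] at hω
    refine .inr fun j hj => ?_
    simp [Fin.ext_iff, show j.val ≠ s.val by omega]

def PairsInNegOneZero (n i : ℕ) (c : Fin n → ℚ) : Prop :=
  ∀ α ∈ posCJ n i, dotV c α ∈ ({-1, 0} : Set ℚ)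

lemma pairsInNegOneZero_of_forall (hi : i ≤ n) {c : Fin n → ℚ}
    (hsupp : ∀ j : Fin n, i ≤ j.val → c j = 0)
    (hstep : ∀ s t : Fin n, s < t → t.val < i → c s - c t ∈ ({-1, 0} : Set ℚ)) :
    PairsInNegOneZero n i c := by
  intro α hα
  rcases mem_posCJ_cases hi hα with ⟨s, t, hst, ht, rfl⟩ | hα0
  · simpa [dotV_eq_dotProduct, dotProduct_sub] using hstep s t hst ht
  · right
    refine Finset.sum_eq_zero fun j _ => ?_
    rcases lt_or_ge j.val i with hj | hj
    · simp [hα0 j hj]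
    · simp [hsupp j hj]

namespace PairsInNegOneZero

variable {c : Fin n → ℚ}

lemma abs_apply_lt_one (h : PairsInNegOneZero n i c) {t : Fin n} (ht : i ≤ t.val) :
    |c t| < 1 := by
  have := h _ (two_smul_single_mem_posCJ ht)
  simp only [dotV_eq_dotProduct, dotProduct_smul, dotProduct_single, smul_eq_mul, mul_one,
    Set.mem_insert_iff, Set.mem_singleton_iff] at this
  rw [abs_lt]
  constructor <;> rcases this with h | h <;> linarith

lemma apply_le_apply (h : PairsInNegOneZero n i c) {s t : Fin n} (hst : s < t)
    (ht : t.val < i) : c s ≤ c t := by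
  have := h _ (single_sub_single_mem_posCJ hst ht)
  simp only [dotV_eq_dotProduct, dotProduct_sub, dotProduct_single, mul_one,
    Set.mem_insert_iff, Set.mem_singleton_iff] at this
  rcases this with h | h <;> linarith

lemma val_eq_of_single (hi : i ≤ n) {s : Fin n} (h : PairsInNegOneZero n i (Pi.single s 1)) :
    s.val = i - 1 := by
  have hs : s.val < i := by
    by_contra! hs
    simpa using h.abs_apply_lt_one hs
  by_contra hs'
  have := h.apply_le_apply (s := s) (t := ⟨i - 1, by omega⟩) (Fin.mk_lt_mk.2 (by omega))
    (by simp; omega)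
  simp only [single_one_apply] at this
  split_ifs at this <;> norm_num at this <;> omega

lemma vals_eq_of_single_add_single (hi : i ≤ n) {s t : Fin n} (hst : s < t)
    (h : PairsInNegOneZero n i (Pi.single s 1 + Pi.single t 1)) :
    s.val = i - 2 ∧ t.val = i - 1 := by
  have hst' : s.val < t.val := hst
  have ht : t.val < i := by
    by_contra! ht
    have := h.abs_apply_lt_one ht
    simp [hst.ne] at this
  have ht' : t.val = i - 1 := by
    by_contra ht'
    have := h.apply_le_apply (s := t) (t := ⟨i - 1, by omega⟩) (Fin.mk_lt_mk.2 (by omega))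
      (by simp; omega)
    simp only [Pi.add_apply, single_one_apply] at this
    split_ifs at this <;> norm_num at this <;> omega
  refine ⟨?_, ht'⟩
  by_contra hs'
  have := h.apply_le_apply (s := s) (t := ⟨i - 2, by omega⟩) (Fin.mk_lt_mk.2 (by omega))
    (by simp; omega)
  simp only [Pi.add_apply, single_one_apply] at this
  split_ifs at this <;> norm_num at this <;> omega

end PairsInNegOneZero

lemma not_pairsInNegOneZero_single_sub_single {s t : Fin n} (hst : s < t) :
    ¬ PairsInNegOneZero n i (Pi.single s 1 - Pi.single t 1) := by
  intro h
  have hst' : s.val < t.val := hst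
  by_cases ht : t.val < i
  · have := h.apply_le_apply hst ht
    simp only [Pi.sub_apply, single_one_apply] at this
    split_ifs at this <;> norm_num at this <;> omega
  · have := h.abs_apply_lt_one (t := t) (by omega)
    simp [hst.ne] at this

lemma pairsInNegOneZero_single_iff (hi1 : 1 ≤ i) (hi2 : i ≤ n) {s : Fin n} :
    PairsInNegOneZero n i (Pi.single s 1) ↔ s.val = i - 1 := by
  refine ⟨fun h => h.val_eq_of_single hi2, fun hs => ?_⟩
  refine pairsInNegOneZero_of_forall hi2 (fun j hj => ?_) (fun a b hab hb => ?_)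
  · simp only [single_one_apply]
    rw [if_neg (by omega)]
  · have : a.val < b.val := hab
    simp only [single_one_apply]
    rw [if_neg (by omega)]
    split_ifs <;> simp

lemma pairsInNegOneZero_single_add_single_iff (hi : i ≤ n) {s t : Fin n} (hst : s < t) :
    PairsInNegOneZero n i (Pi.single s 1 + Pi.single t 1) ↔ s.val = i - 2 ∧ t.val = i - 1 := by
  refine ⟨fun h => h.vals_eq_of_single_add_single hi hst, fun ⟨hs, ht⟩ => ?_⟩
  have hst' : s.val < t.val := hst
  refine pairsInNegOneZero_of_forall hi (fun j hj => ?_) (fun a b hab hb => ?_)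
  · simp only [Pi.add_apply, single_one_apply]
    split_ifs <;> norm_num <;> omega
  · have : a.val < b.val := hab
    simp only [Pi.add_apply, single_one_apply]
    split_ifs <;> norm_num <;> omega

end

/-- Let `W` be the Weyl group of type `C_n` and `i ∈ [n]`.  A coroot
`γ^∨` associated with a positive root `γ ∈ Δ^+ ∖ Δ_{I∖{i}}^+` satisfies
`⟨γ^∨, α⟩ ∈ {−1, 0}` for all `α ∈ Δ_{I∖{i}}^+` if and only if `γ^∨ = ε_i` or
(when `i ≥ 2`) `γ^∨ = ε_{i−1} + ε_i`. -/
theorem typeC_QveeJ_criterion (n i : ℕ) (hi1 : 1 ≤ i) (hi2 : i ≤ n)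
    (γ : Fin n → ℚ) (hγ : γ ∈ posC n) :
    (∀ α ∈ posCJ n i, dotV (corootV γ) α ∈ ({-1, 0} : Set ℚ)) ↔
      (corootV γ = Pi.single (⟨i - 1, by omega⟩ : Fin n) 1 ∨
        (2 ≤ i ∧ corootV γ =
          Pi.single (⟨i - 2, by omega⟩ : Fin n) 1 + Pi.single (⟨i - 1, by omega⟩ : Fin n) 1)) := by
  change PairsInNegOneZero n i (corootV γ) ↔ _
  constructor
  · intro h
    rcases corootV_cases hγ with ⟨s, t, hst, hc | hc⟩ | ⟨s, hc⟩ <;> rw [hc] at h ⊢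
    · exact (not_pairsInNegOneZero_single_sub_single hst h).elim
    · obtain ⟨hs, ht⟩ := (pairsInNegOneZero_single_add_single_iff hi2 hst).1 h
      have hst' : s.val < t.val := hst
      refine .inr ⟨by omega, ?_⟩
      congr <;> exact Fin.ext ‹_›
    · left
      congr
      exact Fin.ext ((pairsInNegOneZero_single_iff hi1 hi2).1 h)
  · rintro (hc | ⟨hi, hc⟩) <;> rw [hc]
    · exact (pairsInNegOneZero_single_iff hi1 hi2).2 rfl
    · exact (pairsInNegOneZero_single_add_single_iff hi2 (Fin.mk_lt_mk.2 (by omega))).2 ⟨rfl, rfl⟩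
end

section
/- In type C_n, for i ∈ [n], one has 2⟨α_i^∨, ρ − ρ_{I∖{i}}⟩ = 2n − i + 1, where ρ (resp. ρ_{I∖{i}}) is half the sum of positive roots of Δ (resp. of Δ_{I∖{i}}). -/
/-- The positive roots of type `C_n` as a `Finset`. -/
noncomputable def posFinsetC (n : ℕ) : Finset (Fin n → ℚ) :=
  ((Finset.univ : Finset (Fin n × Fin n)).filter fun p => p.1 < p.2).image
      (fun p => (Pi.single p.1 1 : Fin n → ℚ) - Pi.single p.2 1) ∪
    ((Finset.univ : Finset (Fin n × Fin n)).filter fun p => p.1 < p.2).image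
      (fun p => (Pi.single p.1 1 : Fin n → ℚ) + Pi.single p.2 1) ∪
    (Finset.univ : Finset (Fin n)).image
      (fun s => (2 : ℚ) • (Pi.single s 1 : Fin n → ℚ))

/-- Half the sum of the positive roots of type `C_n` lying in a given set `S`;
`ρ = rhoSubC n Set.univ` and `ρ_J = rhoSubC n (span of the α_j, j ∈ J)`. -/
noncomputable def rhoSubC (n : ℕ) (S : Set (Fin n → ℚ)) : Fin n → ℚ :=
  (1 / 2 : ℚ) • ∑ α ∈ posFinsetC n, Set.indicator S id α

/-! A positive root lies in the span of the `α_j`, `j ≠ i`, exactly when it pairs to zero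
with `ω_i = ε_1 + ⋯ + ε_i`, which kills every such `α_j`. So `2(ρ - ρ_{I∖{i}})` is the sum of the
roots `ε_a - ε_b` (`a ≤ i < b`), `ε_a + ε_b` (`a ≤ i`, `a < b`) and `2ε_a` (`a ≤ i`), and
counting them coordinatewise gives `2(ρ - ρ_{I∖{i}}) = (2n - i + 1) ω_i`. It remains to note
`⟨α_i^∨, ω_i⟩ = 1`. -/

namespace TypeC

open Finset

variable {n : ℕ}

-- `ε a` is the paper's `ε_{a+1}`: coordinates are indexed from `0`.
abbrev ε (a : Fin n) : Fin n → ℚ := Pi.single a 1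

lemma dotV_eq_dotProduct (x y : Fin n → ℚ) : dotV x y = x ⬝ᵥ y := rfl

lemma ε_sub_ε_inj {a b c d : Fin n} (hab : a < b) (h : ε a - ε b = ε c - ε d) :
    a = c ∧ b = d := by
  have ha := congrFun h a
  have hb := congrFun h b
  simp [Pi.single_apply, hab.ne, hab.ne'] at ha hb
  split_ifs at ha hb <;> simp_all; norm_num at *

lemma ε_add_ε_inj {a b c d : Fin n} (hab : a < b) (hcd : c < d) (h : ε a + ε b = ε c + ε d) :
    a = c ∧ b = d := by
  have ha := congrFun h a
  have hb := congrFun h b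
  simp [Pi.single_apply, hab.ne, hab.ne'] at ha hb
  split_ifs at ha hb <;> (try norm_num at ha) <;> (try norm_num at hb) <;> subst_vars <;>
    first | exact ⟨rfl, rfl⟩ | exact (lt_irrefl _ hab).elim | exact (lt_asymm hab hcd).elim

lemma two_smul_ε_inj {a b : Fin n} (h : (2 : ℚ) • ε a = (2 : ℚ) • ε b) : a = b := by
  simpa [Pi.single_apply] using congrFun h a

lemma ε_sub_ε_ne_ε_add_ε {a b c d : Fin n} (hab : a < b) : ε a - ε b ≠ ε c + ε d := by
  intro h
  have hb := congrFun h b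
  simp [Pi.single_apply, hab.ne'] at hb
  split_ifs at hb <;> norm_num at hb

lemma ε_sub_ε_ne_two_smul_ε {a b c : Fin n} (hab : a < b) :
    ε a - ε b ≠ (2 : ℚ) • ε c := by
  intro h
  have hb := congrFun h b
  simp [Pi.single_apply, hab.ne'] at hb
  split_ifs at hb <;> norm_num at hb

lemma ε_add_ε_ne_two_smul_ε {a b c : Fin n} (hab : a < b) :
    ε a + ε b ≠ (2 : ℚ) • ε c := by
  intro h
  have ha := congrFun h a
  simp [Pi.single_apply, hab.ne] at ha
  split_ifs at ha <;> norm_num at ha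

lemma sum_posFinsetC {M : Type*} [AddCommMonoid M] (g : (Fin n → ℚ) → M) :
    ∑ α ∈ posFinsetC n, g α =
      ∑ a, ∑ b, (if a < b then g (ε a - ε b) else 0) +
        ∑ a, ∑ b, (if a < b then g (ε a + ε b) else 0) + ∑ a, g ((2 : ℚ) • ε a) := by
  set P : Finset (Fin n × Fin n) := univ.filter fun p => p.1 < p.2
  have hP : ∀ f : Fin n → Fin n → M,
      ∑ p ∈ P, f p.1 p.2 = ∑ a, ∑ b, if a < b then f a b else 0 :=
    fun f => by rw [sum_filter, Fintype.sum_prod_type]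
  have h₁ : Disjoint (P.image fun p => ε p.1 - ε p.2) (P.image fun p => ε p.1 + ε p.2) := by
    simp only [disjoint_left, mem_image, mem_filter, P]
    rintro _ ⟨p, ⟨-, hp⟩, rfl⟩ ⟨q, -, hq⟩
    exact ε_sub_ε_ne_ε_add_ε hp hq.symm
  have h₂ : Disjoint ((P.image fun p => ε p.1 - ε p.2) ∪ (P.image fun p => ε p.1 + ε p.2))
      (univ.image fun a => (2 : ℚ) • ε a) := by
    simp only [disjoint_left, mem_union, mem_image, mem_filter, P]
    rintro _ (⟨p, ⟨-, hp⟩, rfl⟩ | ⟨p, ⟨-, hp⟩, rfl⟩) ⟨a, -, ha⟩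
    · exact ε_sub_ε_ne_two_smul_ε hp ha.symm
    · exact ε_add_ε_ne_two_smul_ε hp ha.symm
  rw [posFinsetC, sum_union h₂, sum_union h₁, sum_image, sum_image, sum_image,
    hP fun a b => g (ε a - ε b), hP fun a b => g (ε a + ε b)]
  · exact fun a _ b _ h => two_smul_ε_inj h
  · exact fun p hp q hq h =>
      Prod.ext_iff.2 (ε_add_ε_inj (mem_filter.1 hp).2 (mem_filter.1 hq).2 h)
  · exact fun p hp q _ h => Prod.ext_iff.2 (ε_sub_ε_inj (mem_filter.1 hp).2 h)

/-- `ω_i = ε_1 + ⋯ + ε_i`, the `i`-th fundamental weight. -/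
def fundWeight (n i : ℕ) : Fin n → ℚ := fun c => if (c : ℕ) < i then 1 else 0

def spanSimpleRootsExcept (n i : ℕ) : Submodule ℚ (Fin n → ℚ) :=
  Submodule.span ℚ (alC n '' {j | 1 ≤ j ∧ j ≤ n ∧ j ≠ i})

lemma fundWeight_dotProduct_ε (i : ℕ) (a : Fin n) :
    fundWeight n i ⬝ᵥ ε a = if (a : ℕ) < i then 1 else 0 := by
  simp [dotProduct_single, fundWeight]

lemma alC_succ {j : ℕ} (hj : j + 1 < n) :
    alC n (j + 1) = ε ⟨j, by omega⟩ - ε ⟨j + 1, hj⟩ := by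
  rw [alC, dif_pos ⟨by omega, hj⟩]
  rfl

lemma alC_self (hn : 0 < n) : alC n n = (2 : ℚ) • ε ⟨n - 1, by omega⟩ := by
  rw [alC, dif_neg (by omega), dif_pos ⟨rfl, hn⟩]

lemma fundWeight_dotProduct_alC {i j : ℕ} (hi : i ≤ n) (hj : 1 ≤ j ∧ j ≤ n ∧ j ≠ i) :
    fundWeight n i ⬝ᵥ alC n j = 0 := by
  obtain ⟨k, rfl⟩ : ∃ k, j = k + 1 := ⟨j - 1, by omega⟩
  rcases lt_or_eq_of_le hj.2.1 with hk | hk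
  · rw [alC_succ hk, dotProduct_sub, fundWeight_dotProduct_ε, fundWeight_dotProduct_ε]
    split_ifs <;> simp_all <;> omega
  · rw [hk, alC_self (by omega), dotProduct_smul, fundWeight_dotProduct_ε,
      if_neg (show ¬n - 1 < i by omega)]
    simp

lemma fundWeight_dotProduct_eq_zero_of_mem {i : ℕ} (hi : i ≤ n) {x : Fin n → ℚ}
    (hx : x ∈ spanSimpleRootsExcept n i) : fundWeight n i ⬝ᵥ x = 0 := by
  induction hx using Submodule.span_induction with
  | mem y hy =>
    obtain ⟨j, hj, rfl⟩ := hy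
    exact fundWeight_dotProduct_alC hi hj
  | zero => exact dotProduct_zero _
  | add y z _ _ hy hz => rw [dotProduct_add, hy, hz, add_zero]
  | smul r y _ hy => rw [dotProduct_smul, hy, smul_zero]

lemma ε_sub_ε_mem {i a b : ℕ} (hab : a ≤ b) (hb : b < n) (hcut : ¬(a < i ∧ i ≤ b)) :
    ε ⟨a, by omega⟩ - ε ⟨b, hb⟩ ∈ spanSimpleRootsExcept n i := by
  induction b, hab using Nat.le_induction with
  | base => simp
  | succ b hab ih =>
    have hstep : alC n (b + 1) ∈ spanSimpleRootsExcept n i :=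
      Submodule.subset_span ⟨b + 1, ⟨by omega, by omega, by omega⟩, rfl⟩
    rw [alC_succ hb] at hstep
    simpa using add_mem (ih (by omega) (by omega)) hstep

lemma two_smul_ε_mem {i : ℕ} {a : Fin n} (ha : i ≤ a) :
    (2 : ℚ) • ε a ∈ spanSimpleRootsExcept n i := by
  have hlast : alC n n ∈ spanSimpleRootsExcept n i :=
    Submodule.subset_span ⟨n, ⟨by omega, le_rfl, by omega⟩, rfl⟩
  rw [alC_self (by omega)] at hlast
  have hsub :=
    ε_sub_ε_mem (n := n) (i := i) (a := a) (b := n - 1) (by omega) (by omega) (by omega)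
  simpa [smul_sub] using add_mem (Submodule.smul_mem _ (2 : ℚ) hsub) hlast

lemma ε_add_ε_mem {i : ℕ} {a b : Fin n} (hab : a ≤ b) (ha : i ≤ a) :
    ε a + ε b ∈ spanSimpleRootsExcept n i := by
  have hsub := ε_sub_ε_mem (i := i) (a := a) (b := b) hab b.isLt (by omega)
  have htwo := two_smul_ε_mem (i := i) (a := b) (by omega)
  simpa [two_smul] using add_mem hsub htwo

lemma ε_sub_ε_notMem_iff {i : ℕ} (hi : i ≤ n) {a b : Fin n} (hab : a < b) :
    ε a - ε b ∉ spanSimpleRootsExcept n i ↔ (a : ℕ) < i ∧ i ≤ b := by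
  refine ⟨fun h => by_contra fun hcut => h (by simpa using ε_sub_ε_mem hab.le b.isLt hcut),
    fun hcut hmem => ?_⟩
  have := fundWeight_dotProduct_eq_zero_of_mem hi hmem
  rw [dotProduct_sub, fundWeight_dotProduct_ε, fundWeight_dotProduct_ε, if_pos hcut.1,
    if_neg (by omega)] at this
  norm_num at this

lemma ε_add_ε_notMem_iff {i : ℕ} (hi : i ≤ n) {a b : Fin n} (hab : a ≤ b) :
    ε a + ε b ∉ spanSimpleRootsExcept n i ↔ (a : ℕ) < i := by
  refine ⟨fun h => by_contra fun ha => h (ε_add_ε_mem hab (not_lt.1 ha)), fun ha hmem => ?_⟩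
  have := fundWeight_dotProduct_eq_zero_of_mem hi hmem
  rw [dotProduct_add, fundWeight_dotProduct_ε, fundWeight_dotProduct_ε, if_pos ha] at this
  split_ifs at this <;> norm_num at this

lemma indicator_compl_id_eq_ite {M : Type*} [Zero M] {S : Set M} {x : M} {p : Prop}
    [Decidable p] (h : x ∉ S ↔ p) : Sᶜ.indicator id x = if p then x else 0 := by
  split_ifs with hp
  · exact Set.indicator_of_mem (h.2 hp) id
  · exact Set.indicator_of_notMem (fun hx => hp (h.1 hx)) id

lemma sum_sum_ite_ε_fst (q : Fin n → Fin n → Prop) [∀ a b, Decidable (q a b)] :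
    ∑ a, ∑ b, (if q a b then ε a else 0) = fun c => ∑ b, if q c b then 1 else 0 := by
  funext c
  simp only [Finset.sum_apply, ite_apply, Pi.zero_apply]
  rw [Fintype.sum_eq_single c fun a hac => by simp [Ne.symm hac]]
  simp

lemma sum_sum_ite_ε_snd (q : Fin n → Fin n → Prop) [∀ a b, Decidable (q a b)] :
    ∑ a, ∑ b, (if q a b then ε b else 0) = fun c => ∑ a, if q a c then 1 else 0 := by
  funext c
  simp only [Finset.sum_apply, ite_apply, Pi.zero_apply]
  refine sum_congr rfl fun a _ => ?_
  rw [Fintype.sum_eq_single c fun b hbc => by simp [Ne.symm hbc]]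
  simp

lemma sum_ite_ε_eq_fundWeight (i : ℕ) :
    ∑ a : Fin n, (if (a : ℕ) < i then ε a else 0) = fundWeight n i := by
  funext c
  simp only [Finset.sum_apply, ite_apply, Pi.zero_apply]
  rw [Fintype.sum_eq_single c fun a hac => by simp [Ne.symm hac]]
  simp [fundWeight]

lemma sum_ite_one_eq_of_iff_Ico {l h : ℕ} (hlh : l ≤ h) (hh : h ≤ n) (p : Fin n → Prop)
    [DecidablePred p] (hp : ∀ b : Fin n, p b ↔ l ≤ (b : ℕ) ∧ (b : ℕ) < h) :
    ∑ b : Fin n, (if p b then (1 : ℚ) else 0) = h - l := by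
  rw [sum_congr rfl fun b _ => if_congr (hp b) rfl rfl,
    Fin.sum_univ_eq_sum_range (fun k => if l ≤ k ∧ k < h then (1 : ℚ) else 0), sum_boole]
  have : (range n).filter (fun k => l ≤ k ∧ k < h) = Ico l h := by
    ext k; simp only [mem_filter, mem_range, mem_Ico]; omega
  rw [this, Nat.card_Ico, Nat.cast_sub hlh]

lemma two_smul_rhoSubC_univ_sub (S : Set (Fin n → ℚ)) :
    (2 : ℚ) • (rhoSubC n Set.univ - rhoSubC n S) =
      ∑ α ∈ posFinsetC n, Sᶜ.indicator id α := by
  simp only [rhoSubC, ← smul_sub, smul_smul, ← sum_sub_distrib, Set.indicator_univ,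
    Set.indicator_compl]
  norm_num

lemma ite_indicator_compl_ε_sub_ε {i : ℕ} (hi : i ≤ n) (a b : Fin n) :
    (if a < b then
      (spanSimpleRootsExcept n i : Set (Fin n → ℚ))ᶜ.indicator id (ε a - ε b) else 0) =
      (if a < b ∧ (a : ℕ) < i ∧ i ≤ b then ε a else 0) -
        (if a < b ∧ (a : ℕ) < i ∧ i ≤ b then ε b else 0) := by
  classical
  by_cases hab : a < b
  · rw [if_pos hab, indicator_compl_id_eq_ite (ε_sub_ε_notMem_iff hi hab)]
    split_ifs <;> simp_all
  · simp [hab]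

lemma ite_indicator_compl_ε_add_ε {i : ℕ} (hi : i ≤ n) (a b : Fin n) :
    (if a < b then
      (spanSimpleRootsExcept n i : Set (Fin n → ℚ))ᶜ.indicator id (ε a + ε b) else 0) =
      if a < b ∧ (a : ℕ) < i then ε a + ε b else 0 := by
  classical
  by_cases hab : a < b
  · rw [if_pos hab, indicator_compl_id_eq_ite (ε_add_ε_notMem_iff hi hab.le)]
    simp [hab]
  · simp [hab]

lemma indicator_compl_two_smul_ε {i : ℕ} (hi : i ≤ n) (a : Fin n) :
    (spanSimpleRootsExcept n i : Set (Fin n → ℚ))ᶜ.indicator id ((2 : ℚ) • ε a) =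
      (2 : ℚ) • if (a : ℕ) < i then ε a else 0 := by
  classical
  rw [two_smul, indicator_compl_id_eq_ite (ε_add_ε_notMem_iff hi le_rfl), smul_ite, smul_zero,
    two_smul]

lemma two_smul_rhoSubC_sub {i : ℕ} (hi : i ≤ n) :
    (2 : ℚ) • (rhoSubC n Set.univ - rhoSubC n (spanSimpleRootsExcept n i)) =
      (2 * n - i + 1 : ℚ) • fundWeight n i := by
  rw [two_smul_rhoSubC_univ_sub, sum_posFinsetC]
  simp only [ite_indicator_compl_ε_sub_ε hi, ite_indicator_compl_ε_add_ε hi,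
    indicator_compl_two_smul_ε hi, ← smul_sum, sum_ite_ε_eq_fundWeight, ite_add_zero,
    sum_add_distrib, sum_sub_distrib, sum_sum_ite_ε_fst, sum_sum_ite_ε_snd]
  funext c
  simp only [Pi.add_apply, Pi.sub_apply, Pi.smul_apply, smul_eq_mul, fundWeight]
  -- The coordinate at `c` is `(n - i) - 0 + (n - 1 - c) + c + 2` if `c < i`, else `0 - i + 0 + i`.
  by_cases hc : (c : ℕ) < i
  · rw [sum_ite_one_eq_of_iff_Ico hi le_rfl _ ?_,
      sum_ite_one_eq_of_iff_Ico le_rfl (Nat.zero_le n) _ ?_,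
      sum_ite_one_eq_of_iff_Ico c.isLt le_rfl _ ?_,
      sum_ite_one_eq_of_iff_Ico (Nat.zero_le _) c.isLt.le _ ?_, if_pos hc]
    · push_cast
      ring
    all_goals intro b; simp only [Fin.lt_def]; omega
  · rw [sum_ite_one_eq_of_iff_Ico le_rfl (Nat.zero_le n) _ ?_,
      sum_ite_one_eq_of_iff_Ico (Nat.zero_le _) hi _ ?_,
      sum_ite_one_eq_of_iff_Ico le_rfl (Nat.zero_le n) _ ?_,
      sum_ite_one_eq_of_iff_Ico (Nat.zero_le _) hi _ ?_, if_neg hc]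
    · ring
    all_goals intro b; simp only [Fin.lt_def]; omega

lemma corootV_alC_dotProduct_fundWeight {i : ℕ} (hi1 : 1 ≤ i) (hi2 : i ≤ n) :
    corootV (alC n i) ⬝ᵥ fundWeight n i = 1 := by
  obtain ⟨k, rfl⟩ : ∃ k, i = k + 1 := ⟨i - 1, by omega⟩
  rcases lt_or_eq_of_le hi2 with hk | hk
  · rw [corootV, alC_succ hk, smul_dotProduct, dotV_eq_dotProduct]
    simp [fundWeight]
    norm_num
  · subst hk
    rw [corootV, alC_self (by omega), smul_dotProduct, dotV_eq_dotProduct]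
    simp [fundWeight]

end TypeC

theorem typeC_rho_pairing_general (n i : ℕ) (hi1 : 1 ≤ i) (hi2 : i ≤ n) :
    2 * dotV (corootV (alC n i))
        (rhoSubC n Set.univ -
          rhoSubC n
            (Submodule.span ℚ (alC n '' {j | 1 ≤ j ∧ j ≤ n ∧ j ≠ i}) :
              Submodule ℚ (Fin n → ℚ))) =
      2 * (n : ℚ) - (i : ℚ) + 1 := by
  calc 2 * dotV (corootV (alC n i)) _
      = corootV (alC n i) ⬝ᵥ ((2 : ℚ) • (rhoSubC n Set.univ -
          rhoSubC n (TypeC.spanSimpleRootsExcept n i))) := by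
        rw [dotProduct_smul, smul_eq_mul]
        rfl
    _ = (2 * n - i + 1) * (corootV (alC n i) ⬝ᵥ TypeC.fundWeight n i) := by
        rw [TypeC.two_smul_rhoSubC_sub hi2, dotProduct_smul, smul_eq_mul]
    _ = 2 * n - i + 1 := by rw [TypeC.corootV_alC_dotProduct_fundWeight hi1 hi2, mul_one]

/-- In type `C_n`, for `i ∈ [n]`,
`2⟨α_i^∨, ρ − ρ_{I∖{i}}⟩ = 2n − i + 1`. -/
theorem typeC_rho_pairing (n i : ℕ) (hn : 2 ≤ n) (hi1 : 1 ≤ i) (hi2 : i ≤ n) :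
    2 * dotV (corootV (alC n i))
        (rhoSubC n Set.univ -
          rhoSubC n
            (Submodule.span ℚ (alC n '' {j | 1 ≤ j ∧ j ≤ n ∧ j ≠ i}) :
              Submodule ℚ (Fin n → ℚ))) =
      2 * (n : ℚ) - (i : ℚ) + 1 :=
  typeC_rho_pairing_general n i hi1 hi2
end

section
/- Let W be the Weyl group of type D_n realized as {w ∈ Perm(D_n) : w(σ(s)) = σ(w(s)) for s ∈ [n] and #{s ∈ [n] : w(s) ⪰ n̄} is even}, where D_n is the partially ordered set 1 ≺ ⋯ ≺ n−1 ≺ {n, n̄} ≺ n−1‾ ≺ ⋯ ≺ 1̄ (n and n̄ incomparable). Then the length of w equals Σ_{s=1}^n (a_s(w) + b_s(w)), where a_s(w) = #{t ∈ [s+1,n] : w(s) ≻ w(t)} and b_s(w) = #{t ∈ [s+1,n] : w(s) ≻ σ(w(t))}. -/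
open Equiv

/-- The partially ordered set `D_n = {1 ≺ ⋯ ≺ n−1 ≺ {n, n̄} ≺ (n−1)‾ ≺ ⋯ ≺ 1̄}`
(with `n` and `n̄` incomparable) is modelled on `Fin (2n)` (index `j < n` is the
letter `j+1`; index `j ≥ n` is the letter `(2n−j)‾`; so `n` has index `n−1` and
`n̄` has index `n`).  `sigmaD` is the bar involution `σ : s ↔ s̄`. -/
def sigmaD (n : ℕ) : Equiv.Perm (Fin (2 * n)) :=
  Function.Involutive.toPerm
    (fun j => ⟨2 * n - 1 - j.val, by have := j.isLt; omega⟩)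
    (fun j => by
      have hj := j.isLt
      apply Fin.ext
      show 2 * n - 1 - (2 * n - 1 - j.val) = j.val
      omega)

/-- The strict partial order on `D_n` (in terms of 0-based indices): the index order,
except that `n` (index `n−1`) and `n̄` (index `n`) are incomparable. -/
def ltD (n : ℕ) (a b : ℕ) : Prop :=
  a < b ∧ ¬(a = n - 1 ∧ b = n)

instance (n a b : ℕ) : Decidable (ltD n a b) := by unfold ltD; infer_instance

/-- `valP w u`: the (0-based) index in `D_n` of the entry of `w` at (0-based)
position `u`. -/
def valP {m : ℕ} (w : Equiv.Perm (Fin m)) (u : ℕ) : ℕ :=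
  if h : u < m then (w ⟨u, h⟩).val else 0

/-- The simple reflections of the Weyl group of type `D_n`:
`r_s = (s, s+1)(s̄, (s+1)‾)` for `s ∈ [n−1]` and `r_n = (n−1, n̄)((n−1)‾, n)`. -/
def genD (n : ℕ) : Set (Equiv.Perm (Fin (2 * n))) :=
  {g | ∃ s : ℕ, ∃ (_h1 : 1 ≤ s) (_h2 : s < n),
      g = Equiv.swap ⟨s - 1, by omega⟩ ⟨s, by omega⟩ *
          Equiv.swap (sigmaD n ⟨s - 1, by omega⟩) (sigmaD n ⟨s, by omega⟩)} ∪
  {g | ∃ _h : 2 ≤ n,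
      g = Equiv.swap ⟨n - 2, by omega⟩ ⟨n, by omega⟩ *
          Equiv.swap (sigmaD n ⟨n - 2, by omega⟩) (sigmaD n ⟨n, by omega⟩)}

/-- Coxeter length: word length with respect to the simple reflections of type `D_n`. -/
noncomputable def lenD (n : ℕ) (w : Equiv.Perm (Fin (2 * n))) : ℕ :=
  sInf {k | ∃ l : List (Equiv.Perm (Fin (2 * n))),
    l.length = k ∧ (∀ x ∈ l, x ∈ genD n) ∧ l.prod = w}

/-- `a_s(w) = #{t ∈ [s+1,n] : w(s) ≻ w(t)}` in the partial order of `D_n`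
(0-based `s`). -/
def aD (n : ℕ) (w : Equiv.Perm (Fin (2 * n))) (s : ℕ) : ℕ :=
  ((Finset.Ico (s + 1) n).filter fun t => ltD n (valP w t) (valP w s)).card

/-- `b_s(w) = #{t ∈ [s+1,n] : w(s) ≻ σ(w(t))}` in the partial order of `D_n`
(0-based `s`). -/
def bD (n : ℕ) (w : Equiv.Perm (Fin (2 * n))) (s : ℕ) : ℕ :=
  ((Finset.Ico (s + 1) n).filter fun t => ltD n (2 * n - 1 - valP w t) (valP w s)).card

/-!
Write `F = valP w` for the window `(w(1), …, w(n))` and `σ y = 2n - 1 - y` for the bar involution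
on indices. When `w` commutes with `σ`, a pair `s < t` contributes `[F t < F s]` to `a_s` and
`[2n ≤ F s + F t]` to `b_s`, so `Σ (a_s + b_s)` is the inversion count `invCount n F`.
Right multiplication by `r_s` (`s < n`) swaps two adjacent window entries, and `r_n` replaces the
last two entries `(x, y)` by `(σ y, σ x)`; either changes `invCount` by exactly one, so `invCount`
is at most the length. Conversely, if no generator lowers `invCount`, the window is increasing
and its last two entries sum to less than `2n`; then only the last entry can be barred, the parity
condition forbids even that, and the window is `(1, …, n)`, i.e. `w = 1`. Descending along
generators that lower `invCount` therefore writes `w` as a word of length `invCount n F`.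
-/

namespace TypeD

open Finset

theorem swap_mem_range {n a b x : ℕ} (ha : a < n) (hb : b < n) :
    swap a b x ∈ range n ↔ x ∈ range n := by
  simp only [mem_range, swap_apply_def]
  split_ifs <;> omega

theorem card_filter_range_comp_swap {n a b : ℕ} (ha : a < n) (hb : b < n) (p : ℕ → Prop)
    [DecidablePred p] :
    ((range n).filter fun s => p (swap a b s)).card = ((range n).filter p).card := by
  refine card_equiv (swap a b) fun s => ?_
  simp only [mem_filter, swap_mem_range ha hb]

theorem even_card_filter_iff_of_last_two {n : ℕ} {F G : ℕ → ℕ} (p : ℕ → Prop)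
    [DecidablePred p] (h₂ : 2 ≤ n) (hG : ∀ s < n - 2, G s = F s)
    (hG₁ : p (G (n - 2)) ↔ ¬p (F (n - 1))) (hG₂ : p (G (n - 1)) ↔ ¬p (F (n - 2))) :
    Even ((range n).filter fun s => p (G s)).card ↔
      Even ((range n).filter fun s => p (F s)).card := by
  obtain ⟨m, rfl⟩ := Nat.exists_eq_add_of_le' h₂
  simp only [Nat.add_sub_cancel, show m + 2 - 1 = m + 1 by omega] at hG hG₁ hG₂
  have hrest : ((range m).filter fun s => p (G s)) = (range m).filter fun s => p (F s) :=
    filter_congr fun s hs => by rw [hG s (mem_range.mp hs)]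
  simp only [range_add_one, filter_insert, hrest]
  by_cases h₁ : p (F m) <;> by_cases h₂ : p (F (m + 1)) <;>
    simp_all [Nat.even_add_one, parity_simps]

section PairSum

variable (n : ℕ) (ψ : ℕ → ℕ → ℕ)

def pairSum (F : ℕ → ℕ) : ℕ :=
  ∑ s ∈ range n, ∑ t ∈ Ico (s + 1) n, ψ (F s) (F t)

variable {n ψ}

theorem pairSum_eq_sum_product (F : ℕ → ℕ) :
    pairSum n ψ F =
      ∑ p ∈ range n ×ˢ range n, if p.1 < p.2 then ψ (F p.1) (F p.2) else 0 := by
  rw [sum_product, pairSum]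
  refine sum_congr rfl fun s _ => ?_
  rw [← sum_filter]
  congr 1
  ext t
  simp only [mem_Ico, mem_filter, mem_range]
  omega

theorem pairSum_congr_of_eqOn_last {F G : ℕ → ℕ} (hFG : ∀ s < n - 1, G s = F s)
    (hlast : ∀ s < n - 1, ψ (F s) (G (n - 1)) = ψ (F s) (F (n - 1))) :
    pairSum n ψ G = pairSum n ψ F := by
  refine sum_congr rfl fun s hs => sum_congr rfl fun t ht => ?_
  simp only [mem_range, mem_Ico] at hs ht
  rw [hFG s (by omega)]
  rcases (show t = n - 1 ∨ t < n - 1 by omega) with rfl | htn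
  · exact hlast s (by omega)
  · rw [hFG t htn]

theorem pairSum_congr {F G : ℕ → ℕ} (h : ∀ s < n, G s = F s) :
    pairSum n ψ G = pairSum n ψ F :=
  pairSum_congr_of_eqOn_last (fun s _ => h s (by omega)) fun s _ => by rw [h (n - 1) (by omega)]

theorem pairSum_comp_swap {a b : ℕ} (F : ℕ → ℕ) (hb : b < n) (hab : a + 1 = b) :
    pairSum n ψ (F ∘ swap a b) + ψ (F a) (F b) = pairSum n ψ F + ψ (F b) (F a) := by
  have hreindex : pairSum n ψ (F ∘ swap a b) = ∑ p ∈ range n ×ˢ range n,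
      if swap a b p.1 < swap a b p.2 then ψ (F p.1) (F p.2) else 0 := by
    rw [pairSum_eq_sum_product]
    refine sum_equiv ((swap a b).prodCongr (swap a b)) (fun p => ?_) (fun p _ => ?_)
    · simp only [mem_product, prodCongr_apply, Prod.map_fst, Prod.map_snd,
        swap_mem_range (show a < n by omega) hb]
    · simp only [prodCongr_apply, Prod.map_fst, Prod.map_snd, swap_apply_self,
        Function.comp_apply]
  have hsingle : ∀ c d, c < n → d < n → ψ (F c) (F d) =
      ∑ p ∈ range n ×ˢ range n, if p = (c, d) then ψ (F p.1) (F p.2) else 0 := by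
    intro c d hc hd
    rw [sum_ite_eq', if_pos (by simp only [mem_product, mem_range]; omega)]
  rw [hreindex, pairSum_eq_sum_product, hsingle a b (by omega) hb, hsingle b a hb (by omega),
    ← sum_add_distrib, ← sum_add_distrib]
  refine sum_congr rfl fun ⟨s, t⟩ _ => ?_
  simp only [swap_apply_def, Prod.mk.injEq]
  split_ifs <;> omega

/-- Replacing the last entry `y` by `σ y` does not change `pairSum`, and the move
`(x, y) ↦ (σ y, σ x)` on the last two entries is that replacement, then the swap of the last two
entries, then the replacement again. -/
theorem pairSum_of_sigma_swap_last_two {F G : ℕ → ℕ} (σ : ℕ → ℕ) (h₂ : 2 ≤ n)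
    (hψ₁ : ∀ x, ψ x (σ (F (n - 1))) = ψ x (F (n - 1)))
    (hψ₂ : ∀ x, ψ x (σ (F (n - 2))) = ψ x (F (n - 2)))
    (hG : ∀ s < n - 2, G s = F s) (hG₁ : G (n - 2) = σ (F (n - 1)))
    (hG₂ : G (n - 1) = σ (F (n - 2))) :
    pairSum n ψ G + ψ (F (n - 2)) (σ (F (n - 1)))
      = pairSum n ψ F + ψ (σ (F (n - 1))) (F (n - 2)) := by
  set F' := Function.update F (n - 1) (σ (F (n - 1)))
  have hF' : ∀ s < n - 1, F' s = F s := fun s _ => Function.update_of_ne (by omega) _ _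
  have hF'last : F' (n - 1) = σ (F (n - 1)) := Function.update_self _ _ _
  have hF'F : pairSum n ψ F' = pairSum n ψ F :=
    pairSum_congr_of_eqOn_last hF' fun s _ => by rw [hF'last, hψ₁]
  have hGF' : pairSum n ψ G = pairSum n ψ (F' ∘ swap (n - 2) (n - 1)) := by
    have hswap : ∀ s < n - 1, G s = F' (swap (n - 2) (n - 1) s) := by
      intro s hs
      rcases (show s = n - 2 ∨ s < n - 2 by omega) with rfl | hs
      · rw [swap_apply_left, hF'last, hG₁]
      · rw [swap_apply_of_ne_of_ne (by omega) (by omega), hF' s (by omega), hG s hs]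
    refine pairSum_congr_of_eqOn_last hswap fun s _ => ?_
    simp only [Function.comp_apply, swap_apply_right, hF' (n - 2) (by omega), hG₂, hψ₂]
  have hswap := pairSum_comp_swap (n := n) (ψ := ψ) F' (a := n - 2) (b := n - 1)
    (by omega) (by omega)
  rwa [hF'F, hF' (n - 2) (by omega), hF'last, ← hGF'] at hswap

end PairSum

section InvCount

variable (n : ℕ)

def invWeight (x y : ℕ) : ℕ :=
  (if y < x then 1 else 0) + (if 2 * n ≤ x + y then 1 else 0)

def invCount (F : ℕ → ℕ) : ℕ :=
  pairSum n (invWeight n) F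

def negCount (F : ℕ → ℕ) : ℕ :=
  ((range n).filter fun s => n ≤ F s).card

variable {n}

theorem invWeight_sigma_right (x : ℕ) {y : ℕ} (hy : y < 2 * n) :
    invWeight n x (2 * n - 1 - y) = invWeight n x y := by
  unfold invWeight
  split_ifs <;> omega

theorem invWeight_add_ite_lt (x y : ℕ) :
    invWeight n x y + (if x < y then 1 else 0) = invWeight n y x + (if y < x then 1 else 0) := by
  unfold invWeight
  split_ifs <;> omega

theorem invCount_comp_swap {a b : ℕ} (F : ℕ → ℕ) (hb : b < n) (hab : a + 1 = b) :
    invCount n (F ∘ swap a b) + (if F b < F a then 1 else 0)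
      = invCount n F + (if F a < F b then 1 else 0) := by
  have h := pairSum_comp_swap (ψ := invWeight n) F hb hab
  have h' := invWeight_add_ite_lt (n := n) (F a) (F b)
  unfold invCount
  omega

theorem invCount_of_sigma_swap_last_two {F G : ℕ → ℕ} (h₂ : 2 ≤ n)
    (hF₁ : F (n - 1) < 2 * n) (hF₂ : F (n - 2) < 2 * n) (hG : ∀ s < n - 2, G s = F s)
    (hG₁ : G (n - 2) = 2 * n - 1 - F (n - 1)) (hG₂ : G (n - 1) = 2 * n - 1 - F (n - 2)) :
    invCount n G + (if 2 * n ≤ F (n - 2) + F (n - 1) then 1 else 0)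
      = invCount n F + (if F (n - 2) + F (n - 1) < 2 * n - 1 then 1 else 0) := by
  have h := pairSum_of_sigma_swap_last_two (fun y => 2 * n - 1 - y) h₂
    (fun x => invWeight_sigma_right x hF₁) (fun x => invWeight_sigma_right x hF₂) hG hG₁ hG₂
  have h' := invWeight_add_ite_lt (n := n) (F (n - 2)) (2 * n - 1 - F (n - 1))
  unfold invCount
  split_ifs at h' ⊢ <;> omega

theorem invCount_eq_zero {F : ℕ → ℕ} (hF : ∀ s < n, F s = s) : invCount n F = 0 := by
  unfold invCount pairSum
  refine sum_eq_zero fun s hs => sum_eq_zero fun t ht => ?_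
  simp only [mem_range, mem_Ico] at hs ht
  simp only [invWeight, hF s hs, hF t ht.2]
  split_ifs <;> omega

theorem eq_self_of_no_descent {F : ℕ → ℕ} (hmono : ∀ s, s + 1 < n → F s < F (s + 1))
    (hlast : 2 ≤ n → F (n - 2) + F (n - 1) < 2 * n) (heven : Even (negCount n F)) :
    ∀ s < n, F s = s := by
  have hgrow : ∀ s t, s ≤ t → t < n → F s + (t - s) ≤ F t := by
    intro s t hst htn
    induction t with
    | zero => simp_all
    | succ t ih =>
      rcases (show s = t + 1 ∨ s ≤ t by omega) with rfl | hst
      · simp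
      · have := ih hst (by omega)
        have := hmono t htn
        omega
  intro s hs
  have hlast_lt : F (n - 1) < n := by
    by_contra! hge
    have hfilter : (range n).filter (fun s => n ≤ F s) = {n - 1} := by
      ext t
      simp only [mem_filter, mem_range, mem_singleton]
      constructor
      · rintro ⟨ht, hFt⟩
        by_contra htn
        have hle := hgrow t (n - 2) (by omega) (by omega)
        have hinc := hmono (n - 2) (by omega)
        have hsum := hlast (by omega)
        rw [show n - 2 + 1 = n - 1 by omega] at hinc
        omega
      · rintro rfl
        exact ⟨by omega, hge⟩
    rw [negCount, hfilter, card_singleton] at heven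
    exact Nat.not_even_one heven
  have := hgrow 0 s (by omega) hs
  have := hgrow s (n - 1) (by omega) (by omega)
  omega

end InvCount

section Window

variable {m : ℕ}

theorem valP_lt (w : Perm (Fin m)) {u : ℕ} (hu : u < m) : valP w u < m := by
  rw [valP, dif_pos hu]
  exact (w _).isLt

theorem valP_inj (w : Perm (Fin m)) {u v : ℕ} (hu : u < m) (hv : v < m)
    (h : valP w u = valP w v) : u = v := by
  rw [valP, valP, dif_pos hu, dif_pos hv] at h
  exact Fin.mk.inj (w.injective (Fin.ext h))

theorem valP_mul (w g : Perm (Fin m)) {u : ℕ} (hu : u < m) :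
    valP (w * g) u = valP w (g ⟨u, hu⟩) := by
  rw [valP, valP, dif_pos hu, dif_pos (g _).isLt]
  rfl

theorem valP_one {u : ℕ} (hu : u < m) : valP (1 : Perm (Fin m)) u = u := by
  rw [valP, dif_pos hu]
  rfl

variable {n : ℕ}

theorem sigmaD_val (j : Fin (2 * n)) : (sigmaD n j).val = 2 * n - 1 - j.val :=
  rfl

theorem sigmaD_involutive : Function.Involutive (sigmaD n) :=
  fun j => Fin.ext (by simp only [sigmaD_val]; omega)

theorem valP_sigmaD {w : Perm (Fin (2 * n))} (hw : Commute w (sigmaD n)) {u : ℕ}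
    (hu : u < 2 * n) : valP w (2 * n - 1 - u) = 2 * n - 1 - valP w u := by
  rw [valP, valP, dif_pos (by omega), dif_pos hu]
  exact congrArg Fin.val (Perm.ext_iff.mp hw ⟨u, hu⟩)

theorem valP_add_ne {w : Perm (Fin (2 * n))} (hw : Commute w (sigmaD n)) {s t : ℕ}
    (hs : s < n) (ht : t < n) : valP w s + valP w t ≠ 2 * n - 1 := by
  intro h
  have := valP_sigmaD hw (u := t) (by omega)
  have := valP_lt w (u := t) (by omega)
  have := valP_inj w (u := s) (v := 2 * n - 1 - t) (by omega) (by omega) (by omega)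
  omega

theorem eq_one_of_valP_eq {w : Perm (Fin (2 * n))} (hw : Commute w (sigmaD n))
    (h : ∀ s < n, valP w s = s) : w = 1 := by
  have hall : ∀ u < 2 * n, valP w u = u := by
    intro u hu
    rcases lt_or_ge u n with hun | hun
    · exact h u hun
    · have := valP_sigmaD hw (u := 2 * n - 1 - u) (by omega)
      rw [Nat.sub_sub_self (by omega), h (2 * n - 1 - u) (by omega)] at this
      omega
  ext ⟨u, hu⟩
  have := hall u hu
  rwa [valP, dif_pos hu] at this

end Window

section Generators

theorem commute_swap_mul_swap_of_involutive {α : Type*} [DecidableEq α] {σ : Perm α}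
    (hσ : Function.Involutive σ) {a b : α} (hab : [a, b, σ a, σ b].Nodup) :
    Commute (swap a b * swap (σ a) (σ b)) σ := by
  have hdisj := (Perm.disjoint_swap_swap hab).commute
  have hconj : σ * (swap a b * swap (σ a) (σ b)) * σ⁻¹ = swap a b * swap (σ a) (σ b) := by
    rw [show σ * (swap a b * swap (σ a) (σ b)) * σ⁻¹
        = σ * swap a b * σ⁻¹ * (σ * swap (σ a) (σ b) * σ⁻¹) by group,
      ← swap_apply_apply, ← swap_apply_apply, hσ a, hσ b]
    exact hdisj.eq.symm
  exact (mul_inv_eq_iff_eq_mul.mp hconj).symm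

theorem swap_mul_swap_mul_self {α : Type*} [DecidableEq α] {a b c d : α}
    (h : [a, b, c, d].Nodup) : swap a b * swap c d * (swap a b * swap c d) = 1 := by
  rw [(Perm.disjoint_swap_swap h).commute.symm.mul_mul_mul_comm, swap_mul_self, swap_mul_self,
    mul_one]

theorem val_swap_mul_swap {m : ℕ} (a b c d x : Fin m) :
    ((swap a b * swap c d) x).val = swap a.val b.val (swap c.val d.val x.val) := by
  simp only [Perm.mul_apply, Fin.val_injective.swap_apply]

variable {n : ℕ}

def simpleGen (n s : ℕ) (h₁ : 1 ≤ s) (h₂ : s < n) : Perm (Fin (2 * n)) :=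
  swap ⟨s - 1, by omega⟩ ⟨s, by omega⟩ *
    swap (sigmaD n ⟨s - 1, by omega⟩) (sigmaD n ⟨s, by omega⟩)

def lastGen (n : ℕ) (h : 2 ≤ n) : Perm (Fin (2 * n)) :=
  swap ⟨n - 2, by omega⟩ ⟨n, by omega⟩ *
    swap (sigmaD n ⟨n - 2, by omega⟩) (sigmaD n ⟨n, by omega⟩)

theorem mem_genD_iff {g : Perm (Fin (2 * n))} :
    g ∈ genD n ↔ (∃ s h₁ h₂, g = simpleGen n s h₁ h₂) ∨ ∃ h, g = lastGen n h :=
  Iff.rfl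

theorem simpleGen_mem_genD {s : ℕ} (h₁ : 1 ≤ s) (h₂ : s < n) :
    simpleGen n s h₁ h₂ ∈ genD n :=
  mem_genD_iff.mpr (Or.inl ⟨s, h₁, h₂, rfl⟩)

theorem lastGen_mem_genD (h : 2 ≤ n) : lastGen n h ∈ genD n :=
  mem_genD_iff.mpr (Or.inr ⟨h, rfl⟩)

theorem exists_swap_of_mem_genD {g : Perm (Fin (2 * n))} (hg : g ∈ genD n) :
    ∃ a b, [a, b, sigmaD n a, sigmaD n b].Nodup ∧
      g = swap a b * swap (sigmaD n a) (sigmaD n b) := by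
  rcases hg with ⟨s, h₁, h₂, rfl⟩ | ⟨h, rfl⟩ <;>
  · refine ⟨_, _, ?_, rfl⟩
    simp only [List.nodup_cons, List.mem_cons, List.not_mem_nil, List.nodup_nil, or_false,
      not_false_eq_true, and_true, not_or, Fin.ext_iff, sigmaD_val]
    omega

theorem commute_sigmaD_of_mem_genD {g : Perm (Fin (2 * n))} (hg : g ∈ genD n) :
    Commute g (sigmaD n) := by
  obtain ⟨a, b, hab, rfl⟩ := exists_swap_of_mem_genD hg
  exact commute_swap_mul_swap_of_involutive sigmaD_involutive hab

theorem mul_self_of_mem_genD {g : Perm (Fin (2 * n))} (hg : g ∈ genD n) : g * g = 1 := by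
  obtain ⟨a, b, hab, rfl⟩ := exists_swap_of_mem_genD hg
  exact swap_mul_swap_mul_self hab

theorem valP_mul_simpleGen (w : Perm (Fin (2 * n))) {s : ℕ} (h₁ : 1 ≤ s) (h₂ : s < n)
    {u : ℕ} (hu : u < n) : valP (w * simpleGen n s h₁ h₂) u = valP w (swap (s - 1) s u) := by
  rw [valP_mul w _ (by omega), simpleGen, val_swap_mul_swap]
  congr 1
  simp only [sigmaD_val, swap_apply_def]
  split_ifs <;> omega

theorem valP_mul_lastGen {w : Perm (Fin (2 * n))} (hw : Commute w (sigmaD n)) (h : 2 ≤ n)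
    {u : ℕ} (hu : u < n) : valP (w * lastGen n h) u =
      if u = n - 2 then 2 * n - 1 - valP w (n - 1)
      else if u = n - 1 then 2 * n - 1 - valP w (n - 2) else valP w u := by
  have hσ₁ := valP_sigmaD hw (u := n - 1) (by omega)
  have hσ₂ := valP_sigmaD hw (u := n - 2) (by omega)
  rw [show 2 * n - 1 - (n - 1) = n by omega] at hσ₁
  rw [valP_mul w _ (by omega), lastGen, val_swap_mul_swap]
  simp only [sigmaD_val, swap_apply_def]
  split_ifs <;> omega

end Generators

variable {n : ℕ} {w : Perm (Fin (2 * n))}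

theorem invCount_mul_simpleGen {s : ℕ} (h₁ : 1 ≤ s) (h₂ : s < n) :
    invCount n (valP (w * simpleGen n s h₁ h₂)) + (if valP w s < valP w (s - 1) then 1 else 0)
      = invCount n (valP w) + (if valP w (s - 1) < valP w s then 1 else 0) := by
  rw [invCount, pairSum_congr fun u hu => valP_mul_simpleGen w h₁ h₂ hu]
  exact invCount_comp_swap (valP w) h₂ (by omega)

theorem invCount_mul_lastGen (hw : Commute w (sigmaD n)) (h : 2 ≤ n) :
    invCount n (valP (w * lastGen n h))
        + (if 2 * n ≤ valP w (n - 2) + valP w (n - 1) then 1 else 0)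
      = invCount n (valP w) + (if valP w (n - 2) + valP w (n - 1) < 2 * n - 1 then 1 else 0) :=
  invCount_of_sigma_swap_last_two h (valP_lt w (by omega)) (valP_lt w (by omega))
    (fun u _ => by rw [valP_mul_lastGen hw h (by omega), if_neg (by omega), if_neg (by omega)])
    (by rw [valP_mul_lastGen hw h (by omega), if_pos rfl])
    (by rw [valP_mul_lastGen hw h (by omega), if_neg (by omega), if_pos rfl])

theorem invCount_mul_le (hw : Commute w (sigmaD n)) {g : Perm (Fin (2 * n))} (hg : g ∈ genD n) :
    invCount n (valP (w * g)) ≤ invCount n (valP w) + 1 := by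
  rcases mem_genD_iff.mp hg with ⟨s, h₁, h₂, rfl⟩ | ⟨h, rfl⟩
  · have := invCount_mul_simpleGen (w := w) h₁ h₂
    split_ifs at this <;> omega
  · have := invCount_mul_lastGen hw h
    split_ifs at this <;> omega

theorem even_negCount_mul (hw : Commute w (sigmaD n)) {g : Perm (Fin (2 * n))} (hg : g ∈ genD n)
    (heven : Even (negCount n (valP w))) : Even (negCount n (valP (w * g))) := by
  rcases mem_genD_iff.mp hg with ⟨s, h₁, h₂, rfl⟩ | ⟨h, rfl⟩
  · rwa [negCount,
      filter_congr fun u hu => by rw [valP_mul_simpleGen w h₁ h₂ (mem_range.mp hu)],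
      card_filter_range_comp_swap (by omega) h₂ fun u => n ≤ valP w u]
  · have h₁ := valP_lt w (u := n - 1) (by omega)
    have h₂ := valP_lt w (u := n - 2) (by omega)
    refine (even_card_filter_iff_of_last_two (n ≤ ·) h (fun u _ => ?_) ?_ ?_).mpr heven
    · rw [valP_mul_lastGen hw h (by omega), if_neg (by omega), if_neg (by omega)]
    · rw [valP_mul_lastGen hw h (by omega), if_pos rfl]
      omega
    · rw [valP_mul_lastGen hw h (by omega), if_neg (by omega), if_pos rfl]
      omega

theorem exists_mem_genD_invCount_lt (hw : Commute w (sigmaD n))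
    (heven : Even (negCount n (valP w))) (hne : w ≠ 1) :
    ∃ g ∈ genD n, invCount n (valP (w * g)) < invCount n (valP w) := by
  by_contra! hmin
  refine hne (eq_one_of_valP_eq hw (eq_self_of_no_descent (fun s hs => ?_) (fun h => ?_) heven))
  · have hchange := invCount_mul_simpleGen (w := w) (s := s + 1) (by omega) hs
    have hle := hmin _ (simpleGen_mem_genD (by omega) hs)
    have hne := mt (valP_inj w (u := s) (v := s + 1) (by omega) (by omega)) (by omega)
    simp only [Nat.add_sub_cancel] at hchange
    split_ifs at hchange <;> omega
  · have hchange := invCount_mul_lastGen hw h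
    have hle := hmin _ (lastGen_mem_genD h)
    split_ifs at hchange <;> omega

theorem exists_genD_word_length_le (hw : Commute w (sigmaD n))
    (heven : Even (negCount n (valP w))) :
    ∃ l : List (Perm (Fin (2 * n))),
      (∀ x ∈ l, x ∈ genD n) ∧ l.prod = w ∧ l.length ≤ invCount n (valP w) := by
  induction hk : invCount n (valP w) using Nat.strong_induction_on generalizing w with
  | _ k ih =>
  by_cases hne : w = 1
  · exact ⟨[], by simp, by simp [hne], by simp⟩
  obtain ⟨g, hg, hlt⟩ := exists_mem_genD_invCount_lt hw heven hne
  obtain ⟨l, hl, hprod, hlen⟩ := ih _ (hk ▸ hlt) (hw.mul_left (commute_sigmaD_of_mem_genD hg))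
    (even_negCount_mul hw hg heven) rfl
  refine ⟨l ++ [g], ?_, ?_, ?_⟩
  · simpa [or_imp, forall_and] using And.intro hl hg
  · rw [List.prod_append, List.prod_singleton, hprod, mul_assoc, mul_self_of_mem_genD hg, mul_one]
  · rw [List.length_append, List.length_singleton]
    omega

theorem invCount_le_length (l : List (Perm (Fin (2 * n)))) (hl : ∀ x ∈ l, x ∈ genD n) :
    invCount n (valP l.prod) ≤ l.length := by
  induction l using List.reverseRecOn with
  | nil =>
    rw [List.prod_nil, invCount_eq_zero fun s hs => valP_one (by omega)]
    exact Nat.zero_le _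
  | append_singleton l g ih =>
    simp only [List.mem_append, List.mem_singleton] at hl
    have hcomm : Commute l.prod (sigmaD n) :=
      Commute.list_prod_left _ _ fun x hx => commute_sigmaD_of_mem_genD (hl x (Or.inl hx))
    have := invCount_mul_le hcomm (hl g (Or.inr rfl))
    have := ih fun x hx => hl x (Or.inl hx)
    rw [List.prod_append, List.prod_singleton, List.length_append, List.length_singleton]
    omega

theorem lenD_eq_invCount (hw : Commute w (sigmaD n)) (heven : Even (negCount n (valP w))) :
    lenD n w = invCount n (valP w) := by
  obtain ⟨l, hl, hprod, hlen⟩ := exists_genD_word_length_le hw heven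
  have hmem : l.length ∈ {k | ∃ l : List (Perm (Fin (2 * n))),
      l.length = k ∧ (∀ x ∈ l, x ∈ genD n) ∧ l.prod = w} := ⟨l, rfl, hl, hprod⟩
  refine le_antisymm ((Nat.sInf_le hmem).trans hlen) ?_
  obtain ⟨l₀, hlen₀, hl₀, hprod₀⟩ := Nat.sInf_mem ⟨_, hmem⟩
  rw [lenD, ← hlen₀, ← hprod₀]
  exact invCount_le_length l₀ hl₀

theorem sum_aD_add_bD_eq_invCount (hw : Commute w (sigmaD n)) :
    ∑ s ∈ range n, (aD n w s + bD n w s) = invCount n (valP w) := by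
  refine sum_congr rfl fun s hs => ?_
  rw [aD, bD, card_filter, card_filter, ← sum_add_distrib]
  refine sum_congr rfl fun t ht => ?_
  simp only [mem_range, mem_Ico] at hs ht
  have hsum := valP_add_ne hw ht.2 hs
  have hne := mt (valP_inj w (u := s) (v := t) (by omega) (by omega)) (by omega)
  have hlt := valP_lt w (u := t) (by omega)
  have ha : ltD n (valP w t) (valP w s) ↔ valP w t < valP w s := by
    unfold ltD
    omega
  have hb : ltD n (2 * n - 1 - valP w t) (valP w s) ↔ 2 * n ≤ valP w s + valP w t := by
    unfold ltD
    omega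
  simp only [ha, hb]
  rfl

end TypeD

theorem typeD_length_formula_general (n : ℕ) (w : Equiv.Perm (Fin (2 * n)))
    (hcomm : ∀ j, w (sigmaD n j) = sigmaD n (w j))
    (heven : Even ((Finset.range n).filter fun s => n ≤ valP w s).card) :
    lenD n w = ∑ s ∈ Finset.range n, (aD n w s + bD n w s) := by
  have hw : Commute w (sigmaD n) := Equiv.ext hcomm
  rw [TypeD.lenD_eq_invCount hw heven, TypeD.sum_aD_add_bD_eq_invCount hw]

/-- For `w` in the Weyl group of type `D_n` (a permutation of `D_n`
commuting with `σ` with an even number of `s ∈ [n]` such that `w(s) ⪰ n̄`), the length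
of `w` equals `Σ_{s=1}^n (a_s(w) + b_s(w))`. -/
theorem typeD_length_formula (n : ℕ) (hn : 4 ≤ n) (w : Equiv.Perm (Fin (2 * n)))
    (hcomm : ∀ j, w (sigmaD n j) = sigmaD n (w j))
    (heven : Even ((Finset.range n).filter fun s => n ≤ valP w s).card) :
    lenD n w = ∑ s ∈ Finset.range n, (aD n w s + bD n w s) :=
  typeD_length_formula_general n w hcomm heven
end

section
/- Let J = [p, q] ⊆ [n] be an interval and define a directed graph on subsets of J with an edge M → N whenever there exists j with j ∈ N, j+1 ∈ M and M ∖ {j+1} = N ∖ {j} (type (M1)). Then for M = {m_1 < ⋯ < m_r} and N = {n_1 < ⋯ < n_s}, there is a directed path from M to N if and only if r = s and m_ν ≥ n_ν for all ν ∈ [r]. -/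
/-!
An (M1) edge lowers an element `j + 1` of `M` into the free slot `j`, which replaces one entry
of the increasing enumeration of `M` by a smaller one; hence reachability forces equal sizes
and entrywise domination. Conversely, if `M ≠ N` dominates `N` entrywise, lower the first entry
with `m_ν > n_ν`: the slot `m_ν - 1` is free since `m_{ν-1} = n_{ν-1} < n_ν ≤ m_ν - 1`, domination
persists, and `∑ M` drops, so induction on `∑ M` produces a path.
-/

/-- Edge of type (M1) between Maya diagrams (subsets of the interval `J = [p,q]`):
`M → N` if there exists `j` with `j ∈ N`, `j+1 ∈ M` and `M ∖ {j+1} = N ∖ {j}`. -/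
def mayaM1 (p q : ℕ) (M N : Finset ℕ) : Prop :=
  M ⊆ Finset.Icc p q ∧ N ⊆ Finset.Icc p q ∧
    ∃ j, j ∈ N ∧ j + 1 ∈ M ∧ M.erase (j + 1) = N.erase j

open Finset List

theorem List.Forall₂.trans {α : Type*} {R : α → α → Prop} [IsTrans α R] :
    ∀ {l₁ l₂ l₃ : List α}, Forall₂ R l₁ l₂ → Forall₂ R l₂ l₃ → Forall₂ R l₁ l₃
  | _, _, _, .nil, .nil => .nil
  | _, _, _, .cons h₁₂ t₁₂, .cons h₂₃ t₂₃ => .cons (_root_.trans h₁₂ h₂₃) (t₁₂.trans t₂₃)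

theorem List.forall₂_iff_getD {α : Type*} {R : α → α → Prop} {l₁ l₂ : List α} (d : α) :
    Forall₂ R l₁ l₂ ↔ l₁.length = l₂.length ∧ ∀ k < l₂.length, R (l₁.getD k d) (l₂.getD k d) := by
  rw [forall₂_iff_get]
  refine and_congr_right fun hlen => ⟨fun h k hk => ?_, fun h k h₁ h₂ => ?_⟩
  · simpa [getD_eq_getElem, hk, hlen] using h k (hlen ▸ hk) hk
  · simpa [getD_eq_getElem, h₁, h₂] using h k h₂

def lowerAt (j x : ℕ) : ℕ := if x = j + 1 then j else x

theorem lowerAt_le (j x : ℕ) : lowerAt j x ≤ x := by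
  unfold lowerAt; split_ifs <;> omega

theorem lowerAt_of_ne {j x : ℕ} (h : x ≠ j + 1) : lowerAt j x = x := if_neg h

theorem List.forall₂_map_lowerAt (j : ℕ) (l : List ℕ) : Forall₂ (· ≤ ·) (l.map (lowerAt j)) l :=
  forall₂_map_left_iff.2 (forall₂_same.2 fun x _ => lowerAt_le j x)

theorem List.exists_lowerAt_of_forall₂ {a b : List ℕ} (ha : a.Pairwise (· < ·))
    (hb : b.Pairwise (· < ·)) (hba : Forall₂ (· ≤ ·) b a) (hne : b ≠ a) :
    ∃ j, j ∉ a ∧ j + 1 ∈ a ∧ (∃ y ∈ b, y ≤ j) ∧ Forall₂ (· ≤ ·) b (a.map (lowerAt j)) := by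
  induction hba with
  | nil => exact absurd rfl hne
  | @cons y x b a hyx hba ih =>
    rw [pairwise_cons] at ha hb
    rcases hyx.lt_or_eq with hlt | rfl
    · refine ⟨x - 1, ?_, by simp [Nat.sub_add_cancel (by omega : 1 ≤ x)],
        ⟨y, mem_cons_self, by omega⟩, ?_⟩
      · simp only [mem_cons, not_or]
        exact ⟨by omega, fun hmem => by have := ha.1 _ hmem; omega⟩
      · have hfix : a.map (lowerAt (x - 1)) = a :=
          (map_congr_left fun z hz => lowerAt_of_ne (by have := ha.1 z hz; omega)).trans (map_id a)
        rw [map_cons, hfix, lowerAt, if_pos (by omega)]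
        exact .cons (by omega) hba
    · obtain ⟨j, hja, hj1a, ⟨y', hy'b, hy'j⟩, hdom⟩ := ih ha.2 hb.2 fun h => hne (h ▸ rfl)
      have hylt : y < j := (hb.1 y' hy'b).trans_le hy'j
      refine ⟨j, ?_, mem_cons_of_mem _ hj1a, ⟨y', mem_cons_of_mem _ hy'b, hy'j⟩, ?_⟩
      · simp only [mem_cons, not_or]
        exact ⟨by omega, hja⟩
      · rw [map_cons, lowerAt_of_ne (by have := ha.1 _ hj1a; omega)]
        exact .cons le_rfl hdom

theorem Finset.sort_insert_erase_succ {A : Finset ℕ} {j : ℕ} (hj : j ∉ A) (hj1 : j + 1 ∈ A) :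
    (insert j (A.erase (j + 1))).sort (· ≤ ·) = (A.sort (· ≤ ·)).map (lowerAt j) := by
  have hlt : ((A.sort (· ≤ ·)).map (lowerAt j)).Pairwise (· < ·) := by
    refine pairwise_map.2 ((sortedLT_iff_pairwise.1 (sortedLT_sort A)).imp_of_mem ?_)
    intro a b ha hb hab
    have : a ≠ j := fun h => hj (h ▸ (mem_sort _).1 ha)
    unfold lowerAt; split_ifs <;> omega
  have himage : ((A.sort (· ≤ ·)).map (lowerAt j)).toFinset = insert j (A.erase (j + 1)) := by
    ext x
    simp only [List.mem_toFinset, List.mem_map, mem_sort, mem_insert, mem_erase, lowerAt]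
    constructor
    · rintro ⟨a, ha, rfl⟩
      split_ifs with h
      · exact .inl rfl
      · exact .inr ⟨h, ha⟩
    · rintro (rfl | ⟨hne, hx⟩)
      · exact ⟨_, hj1, if_pos rfl⟩
      · exact ⟨x, hx, if_neg hne⟩
  rw [← himage, List.toFinset_sort _ hlt.nodup]
  exact hlt.imp le_of_lt

theorem mayaM1_iff {p q : ℕ} {M N : Finset ℕ} :
    mayaM1 p q M N ↔ M ⊆ Icc p q ∧ N ⊆ Icc p q ∧
      ∃ j, j ∉ M ∧ j + 1 ∈ M ∧ N = insert j (M.erase (j + 1)) := by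
  refine and_congr_right fun _ => and_congr_right fun _ => exists_congr fun j => ?_
  constructor
  · rintro ⟨hjN, hj1M, he⟩
    have hjM : j ∉ M := fun hj => notMem_erase j N (he ▸ mem_erase.2 ⟨by omega, hj⟩)
    exact ⟨hjM, hj1M, by rw [he, insert_erase hjN]⟩
  · rintro ⟨hjM, hj1M, rfl⟩
    exact ⟨mem_insert_self _ _, hj1M,
      (erase_insert fun h => hjM (mem_of_mem_erase h)).symm⟩

section

variable {p q : ℕ} {M N : Finset ℕ}

theorem forall₂_sort_of_mayaM1 (h : mayaM1 p q M N) :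
    Forall₂ (· ≤ ·) (N.sort (· ≤ ·)) (M.sort (· ≤ ·)) := by
  obtain ⟨-, -, j, hjM, hj1M, rfl⟩ := mayaM1_iff.1 h
  rw [sort_insert_erase_succ hjM hj1M]
  exact forall₂_map_lowerAt j _

theorem forall₂_sort_of_reflTransGen (h : Relation.ReflTransGen (mayaM1 p q) M N) :
    Forall₂ (· ≤ ·) (N.sort (· ≤ ·)) (M.sort (· ≤ ·)) := by
  induction h with
  | refl => exact forall₂_refl _
  | tail _ hstep ih => exact (forall₂_sort_of_mayaM1 hstep).trans ih

theorem exists_mayaM1_of_forall₂_sort (hM : M ⊆ Icc p q) (hN : N ⊆ Icc p q)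
    (hNM : Forall₂ (· ≤ ·) (N.sort (· ≤ ·)) (M.sort (· ≤ ·))) (hne : N ≠ M) :
    ∃ M', mayaM1 p q M M' ∧ Forall₂ (· ≤ ·) (N.sort (· ≤ ·)) (M'.sort (· ≤ ·)) ∧
      ∑ x ∈ M', x < ∑ x ∈ M, x := by
  obtain ⟨j, hjM, hj1M, ⟨y, hyN, hyj⟩, hdom⟩ :=
    exists_lowerAt_of_forall₂ (sortedLT_iff_pairwise.1 (sortedLT_sort M))
      (sortedLT_iff_pairwise.1 (sortedLT_sort N)) hNM
      (fun h => hne (by simpa using congrArg List.toFinset h))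
  simp only [mem_sort] at hjM hj1M hyN
  have hjM' : j ∉ M.erase (j + 1) := fun h => hjM (mem_of_mem_erase h)
  refine ⟨insert j (M.erase (j + 1)), mayaM1_iff.2 ⟨hM, ?_, j, hjM, hj1M, rfl⟩,
    sort_insert_erase_succ hjM hj1M ▸ hdom, ?_⟩
  · have hy := mem_Icc.1 (hN hyN)
    have hj1 := mem_Icc.1 (hM hj1M)
    exact insert_subset (mem_Icc.2 ⟨by omega, by omega⟩) ((erase_subset _ _).trans hM)
  · rw [sum_insert hjM', ← add_sum_erase M (fun x => x) hj1M]
    omega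

theorem reflTransGen_of_forall₂_sort (hM : M ⊆ Icc p q) (hN : N ⊆ Icc p q)
    (hNM : Forall₂ (· ≤ ·) (N.sort (· ≤ ·)) (M.sort (· ≤ ·))) :
    Relation.ReflTransGen (mayaM1 p q) M N := by
  induction hs : ∑ x ∈ M, x using Nat.strong_induction_on generalizing M with
  | _ s ih =>
    by_cases hne : N = M
    · exact hne ▸ .refl
    obtain ⟨M', hstep, hNM', hsum⟩ := exists_mayaM1_of_forall₂_sort hM hN hNM hne
    exact .head hstep (ih _ (hs ▸ hsum) (mayaM1_iff.1 hstep).2.1 hNM' rfl)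

end

theorem maya_reachability_typeC_general (p q : ℕ)
    (M N : Finset ℕ) (hM : M ⊆ Finset.Icc p q) (hN : N ⊆ Finset.Icc p q) :
    Relation.ReflTransGen (mayaM1 p q) M N ↔
      (M.card = N.card ∧
        ∀ k < M.card, (N.sort (· ≤ ·)).getD k 0 ≤ (M.sort (· ≤ ·)).getD k 0) := by
  rw [← length_sort (· ≤ ·), ← length_sort (s := N) (· ≤ ·), eq_comm, ← forall₂_iff_getD]
  exact ⟨forall₂_sort_of_reflTransGen, reflTransGen_of_forall₂_sort hM hN⟩

/-- For the directed graph on subsets of the interval `J = [p,q] ⊆ [n]`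
with only edges of type (M1), and `M = {m_1 < ⋯ < m_r}`, `N = {n_1 < ⋯ < n_s}`, there is a
directed path from `M` to `N` if and only if `r = s` and `m_ν ≥ n_ν` for all `ν ∈ [r]`. -/
theorem maya_reachability_typeC (n p q : ℕ) (hp : 1 ≤ p) (hq : q ≤ n)
    (M N : Finset ℕ) (hM : M ⊆ Finset.Icc p q) (hN : N ⊆ Finset.Icc p q) :
    Relation.ReflTransGen (mayaM1 p q) M N ↔
      (M.card = N.card ∧
        ∀ k < M.card, (N.sort (· ≤ ·)).getD k 0 ≤ (M.sort (· ≤ ·)).getD k 0) :=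
  maya_reachability_typeC_general p q M N hM hN
end

section
/- Let J = [p, q] ⊆ [n] be an interval with n−1, n ∈ J, and define a directed graph on subsets of J with edges of type (M1) (there exists j with j ∈ N, j+1 ∈ M, M∖{j+1} = N∖{j}) and type (M3) (n−1, n ∈ N and M = N ∖ {n−1, n}). Then for M = {m_1 < ⋯ < m_r} and N = {n_1 < ⋯ < n_s}, there is a directed path from M to N if and only if s − r is a nonnegative even integer and m_ν ≥ n_ν for all ν ∈ [r]. -/
/-- Edge of type (M3) (type `D_n`, `n−1, n ∈ J = [p,n]`):
`M → N` if `n−1, n ∈ N` and `M = N ∖ {n−1, n}`. -/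
def mayaM3 (p n : ℕ) (M N : Finset ℕ) : Prop :=
  M ⊆ Finset.Icc p n ∧ N ⊆ Finset.Icc p n ∧
    n - 1 ∈ N ∧ n ∈ N ∧ M = (N.erase (n - 1)).erase n

open scoped symmDiff

namespace Finset

variable {α : Type*} [LinearOrder α]

def CountLE (M N : Finset α) : Prop :=
  ∀ t, #{x ∈ M | x ≤ t} ≤ #{x ∈ N | x ≤ t}

theorem CountLE.refl (M : Finset α) : CountLE M M := fun _ => le_rfl

theorem CountLE.trans {L M N : Finset α} (hLM : CountLE L M) (hMN : CountLE M N) :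
    CountLE L N := fun t => (hLM t).trans (hMN t)

theorem CountLE.of_subset {M N : Finset α} (h : M ⊆ N) : CountLE M N :=
  fun _ => card_le_card (filter_subset_filter _ h)

theorem card_filter_le_insert {s : Finset α} {a : α} (ha : a ∉ s) (t : α) :
    #{x ∈ insert a s | x ≤ t} = #{x ∈ s | x ≤ t} + if a ≤ t then 1 else 0 := by
  rw [filter_insert]
  split_ifs
  · exact card_insert_of_notMem (fun h => ha (mem_filter.1 h).1)
  · rfl

theorem card_filter_le_eq_card_filter_lt_add (s : Finset α) (t : α) :
    #{x ∈ s | x ≤ t} = #{x ∈ s | x < t} + if t ∈ s then 1 else 0 := by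
  split_ifs with ht
  · rw [← card_insert_of_notMem (s := {x ∈ s | x < t}) (a := t) (by simp)]
    congr 1
    ext x
    simp only [mem_filter, mem_insert, le_iff_lt_or_eq]
    aesop
  · congr 1
    ext x
    simp only [mem_filter, le_iff_lt_or_eq]
    aesop

theorem countLE_insert_of_le {s : Finset α} {a c : α} (ha : a ∉ s) (hc : c ∉ s) (hac : a ≤ c) :
    CountLE (insert c s) (insert a s) := by
  intro t
  rw [card_filter_le_insert ha, card_filter_le_insert hc]
  split_ifs <;> grind

theorem countLE_insert_insert {s : Finset α} {a b c d : α} (ha : a ∉ insert b s) (hb : b ∉ s)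
    (hc : c ∉ insert d s) (hd : d ∉ s) (hac : a ≤ c) (hbd : b ≤ d) :
    CountLE (insert c (insert d s)) (insert a (insert b s)) := by
  intro t
  rw [card_filter_le_insert ha, card_filter_le_insert hb, card_filter_le_insert hc,
    card_filter_le_insert hd]
  split_ifs <;> grind

theorem CountLE.of_insert_of_forall_lt {M T : Finset α} {a : α} (h : CountLE M (insert a T))
    (hT : ∀ x ∈ T, x < a) (hcard : #M ≤ #T) : CountLE M T := by
  intro t
  by_cases hat : a ≤ t
  · have hall : {x ∈ T | x ≤ t} = T := filter_true_of_mem fun x hx => (hT x hx).le.trans hat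
    rw [hall]
    exact (card_filter_le _ _).trans hcard
  · have := h t
    rwa [card_filter_le_insert (fun ha => lt_irrefl a (hT a ha)), if_neg hat, add_zero] at this

theorem CountLE.exists_lt_of_ne {M N : Finset α} (h : CountLE M N) (hne : M ≠ N) :
    ∃ x ∈ N, x ∉ M ∧ #{y ∈ M | y ≤ x} < #{y ∈ N | y ≤ x} := by
  have hsd : (M ∆ N).Nonempty := symmDiff_nonempty.2 hne
  set x := (M ∆ N).min' hsd
  have hbelow : {y ∈ M | y < x} = {y ∈ N | y < x} := by
    ext y
    simp only [mem_filter]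
    refine ⟨fun ⟨hy, hyx⟩ => ⟨?_, hyx⟩, fun ⟨hy, hyx⟩ => ⟨?_, hyx⟩⟩ <;> by_contra hy'
    all_goals exact (min'_le _ y (mem_symmDiff.2 (by tauto))).not_gt hyx
  have hM := card_filter_le_eq_card_filter_lt_add M x
  have hN := card_filter_le_eq_card_filter_lt_add N x
  rw [hbelow] at hM
  rcases mem_symmDiff.1 ((M ∆ N).min'_mem hsd) with ⟨hxM, hxN⟩ | ⟨hxN, hxM⟩
  · have := h x
    rw [if_pos hxM] at hM
    rw [if_neg hxN] at hN
    omega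
  · rw [if_neg hxM] at hM
    rw [if_pos hxN] at hN
    exact ⟨x, hxN, hxM, by omega⟩

theorem exists_eq_insert_insert_of_two_le_card {s : Finset α} (hs : 2 ≤ #s) :
    ∃ a b t, a < b ∧ (∀ x ∈ t, x < a) ∧ s = insert a (insert b t) := by
  have hne : s.Nonempty := card_pos.1 (by omega)
  have hne' : (s.erase (s.max' hne)).Nonempty :=
    card_pos.1 (by rw [card_erase_of_mem (max'_mem _ _)]; omega)
  refine ⟨_, s.max' hne, _, lt_max'_of_mem_erase_max' _ _ (max'_mem _ hne'),
    fun x hx => lt_max'_of_mem_erase_max' _ _ hx, ?_⟩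
  rw [insert_comm, insert_erase (max'_mem _ _), insert_erase (max'_mem _ _)]

theorem sort_getElem_le_iff (A : Finset α) {k : ℕ} (hk : k < #A) (t : α) :
    (A.sort (· ≤ ·))[k]'(by simpa using hk) ≤ t ↔ k < #{x ∈ A | x ≤ t} := by
  set f := A.orderEmbOfFin rfl
  have hcount : #{x ∈ A | x ≤ t} = #{i | f i ≤ t} := by
    conv_lhs => rw [← A.map_orderEmbOfFin_univ rfl]
    rw [filter_map, card_map]
    rfl
  change f ⟨k, hk⟩ ≤ t ↔ _
  rw [hcount]
  constructor
  · intro h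
    calc k < #(Iic (⟨k, hk⟩ : Fin #A)) := by simp
      _ ≤ _ := card_le_card fun i hi =>
        mem_filter.2 ⟨mem_univ _, (f.monotone (mem_Iic.1 hi)).trans h⟩
  · intro h
    by_contra! hlt
    have : #{i | f i ≤ t} ≤ #(Iio (⟨k, hk⟩ : Fin #A)) := card_le_card fun i hi =>
      mem_Iio.2 (f.lt_iff_lt.1 (((mem_filter.1 hi).2).trans_lt hlt))
    rw [Fin.card_Iio] at this
    exact absurd h this.not_gt

theorem forall_sort_getD_le_iff_countLE {M N : Finset α} (hMN : #M ≤ #N) (d : α) :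
    (∀ k < #M, (N.sort (· ≤ ·)).getD k d ≤ (M.sort (· ≤ ·)).getD k d) ↔ CountLE M N := by
  have getD_eq (A : Finset α) {k} (hk : k < #A) :
      (A.sort (· ≤ ·)).getD k d = (A.sort (· ≤ ·))[k]'(by simpa using hk) :=
    List.getD_eq_getElem _ _ _
  constructor
  · intro h t
    by_contra! hlt
    have hk : #{x ∈ N | x ≤ t} < #M := hlt.trans_le (card_filter_le _ _)
    have hMk := (M.sort_getElem_le_iff hk t).2 hlt
    have := h _ hk
    rw [getD_eq M hk, getD_eq N (hk.trans_le hMN)] at this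
    exact lt_irrefl _ ((N.sort_getElem_le_iff (hk.trans_le hMN) t).1 (this.trans hMk))
  · intro h k hk
    rw [getD_eq M hk, getD_eq N (hk.trans_le hMN), sort_getElem_le_iff _ (hk.trans_le hMN)]
    exact ((M.sort_getElem_le_iff hk _).1 le_rfl).trans_le (h _)

end Finset

open Finset Relation

def mayaStep (p n : ℕ) (M N : Finset ℕ) : Prop :=
  mayaM1 p n M N ∨ mayaM3 p n M N

theorem mayaM1.exists_eq_insert {p q : ℕ} {M N : Finset ℕ} (h : mayaM1 p q M N) :
    ∃ j T, j ∉ T ∧ j + 1 ∉ T ∧ M = insert (j + 1) T ∧ N = insert j T := by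
  obtain ⟨-, -, j, hjN, hjM, hMN⟩ := h
  refine ⟨j, M.erase (j + 1), ?_, notMem_erase _ _, (insert_erase hjM).symm, ?_⟩
  · rw [hMN]
    exact notMem_erase _ _
  · rw [hMN, insert_erase hjN]

theorem mayaM1_insert {p q j : ℕ} {T : Finset ℕ} (hT : insert (j + 1) T ⊆ Icc p q)
    (hpj : p ≤ j) (hj : j ∉ T) (hj1 : j + 1 ∉ T) :
    mayaM1 p q (insert (j + 1) T) (insert j T) := by
  refine ⟨hT, ?_, j, mem_insert_self _ _, mem_insert_self _ _, ?_⟩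
  · intro x hx
    rcases mem_insert.1 hx with rfl | hx
    · have := mem_Icc.1 (hT (mem_insert_self _ _))
      exact mem_Icc.2 ⟨hpj, by omega⟩
    · exact hT (mem_insert_of_mem hx)
  · rw [erase_insert hj, erase_insert hj1]

theorem mayaM3.subset {p n : ℕ} {M N : Finset ℕ} (h : mayaM3 p n M N) : M ⊆ N := by
  rw [h.2.2.2.2]
  exact (erase_subset _ _).trans (erase_subset _ _)

theorem mayaM3.card_eq {p n : ℕ} (hp : 1 ≤ p) {M N : Finset ℕ} (h : mayaM3 p n M N) :
    #N = #M + 2 := by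
  obtain ⟨-, hN, hn1, hn, rfl⟩ := h
  have hpn := (mem_Icc.1 (hN hn)).1
  rw [← card_erase_add_one hn1, ← card_erase_add_one (mem_erase.2 ⟨by omega, hn⟩)]

theorem mayaM3_insert_insert {p n : ℕ} {T : Finset ℕ} (hT : T ⊆ Icc p n) (hpn : p < n)
    (hn1 : n - 1 ∉ T) (hn : n ∉ T) : mayaM3 p n T (insert (n - 1) (insert n T)) := by
  have hn1' : n - 1 ∉ insert n T := by
    simp only [mem_insert, not_or]
    exact ⟨by omega, hn1⟩
  refine ⟨hT, ?_, mem_insert_self _ _, mem_insert_of_mem (mem_insert_self _ _), ?_⟩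
  · exact insert_subset (mem_Icc.2 ⟨by omega, by omega⟩)
      (insert_subset (mem_Icc.2 ⟨hpn.le, le_rfl⟩) hT)
  · rw [erase_insert hn1', erase_insert hn]

theorem exists_mayaM1_countLE {p n : ℕ} {M N : Finset ℕ} (hM : M ⊆ Icc p n)
    (hN : N ⊆ Icc p n) (hcard : #M = #N) (hMN : CountLE M N) (hne : M ≠ N) :
    ∃ M', mayaM1 p n M M' ∧ CountLE M' N := by
  obtain ⟨x, hxN, hxM, hlt⟩ := hMN.exists_lt_of_ne hne
  have habove : {y ∈ M | x < y}.Nonempty := by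
    by_contra! hempty
    rw [filter_eq_empty_iff] at hempty
    have hall : {y ∈ M | y ≤ x} = M := filter_true_of_mem fun y hy => not_lt.1 (hempty hy)
    have := card_filter_le N (· ≤ x)
    rw [hall] at hlt
    omega
  set a := {y ∈ M | x < y}.min' habove
  obtain ⟨haM, hxa⟩ : a ∈ M ∧ x < a := mem_filter.1 (min'_mem _ habove)
  have hgap : ∀ y ∈ M, x < y → a ≤ y := fun y hy hxy => min'_le _ _ (mem_filter.2 ⟨hy, hxy⟩)
  obtain ⟨c, hc⟩ : ∃ c, a = c + 1 := ⟨a - 1, by omega⟩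
  rw [hc] at haM hxa hgap
  have hxc : x ≤ c := by omega
  have hcM : c ∉ M := fun hcM => by
    rcases hxc.lt_or_eq with hxc | rfl
    · exact absurd (hgap c hcM hxc) (by omega)
    · exact hxM hcM
  set T := M.erase (c + 1)
  have hMT : M = insert (c + 1) T := (insert_erase haM).symm
  have hcT : c ∉ T := fun h => hcM (mem_of_mem_erase h)
  have hc1T : c + 1 ∉ T := notMem_erase _ _
  have hstep : mayaM1 p n M (insert c T) := by
    rw [hMT] at hM ⊢
    exact mayaM1_insert hM ((mem_Icc.1 (hN hxN)).1.trans hxc) hcT hc1T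
  refine ⟨_, hstep, fun t => ?_⟩
  have hM't := card_filter_le_insert hcT t
  have hMt := card_filter_le_insert hc1T t
  rw [← hMT] at hMt
  rcases eq_or_ne t c with rfl | htc
  · have hflat : {y ∈ M | y ≤ t} = {y ∈ M | y ≤ x} := filter_congr fun y hy =>
      ⟨fun hyt => not_lt.1 fun hxy => absurd (hgap y hy hxy) (by omega), fun hyx => hyx.trans hxc⟩
    have hNmono : #{y ∈ N | y ≤ x} ≤ #{y ∈ N | y ≤ t} :=
      card_le_card fun y hy => mem_filter.2 ⟨(mem_filter.1 hy).1, (mem_filter.1 hy).2.trans hxc⟩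
    rw [hflat] at hMt
    rw [if_pos le_rfl] at hM't
    rw [if_neg (by omega)] at hMt
    omega
  · have := hMN t
    split_ifs at hM't hMt <;> omega

theorem reflTransGen_mayaStep_of_card_eq {p n : ℕ} {M N : Finset ℕ} (hM : M ⊆ Icc p n)
    (hN : N ⊆ Icc p n) (hcard : #M = #N) (hMN : CountLE M N) :
    ReflTransGen (mayaStep p n) M N := by
  by_cases hne : M = N
  · exact hne ▸ .refl
  obtain ⟨M', hstep, hM'N⟩ := exists_mayaM1_countLE hM hN hcard hMN hne
  obtain ⟨j, T, hj, hj1, rfl, rfl⟩ := hstep.exists_eq_insert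
  rw [card_insert_of_notMem hj1] at hcard
  have : ∑ x ∈ insert j T, x < ∑ x ∈ insert (j + 1) T, x := by
    rw [sum_insert hj, sum_insert hj1]
    omega
  exact .head (Or.inl hstep)
    (reflTransGen_mayaStep_of_card_eq hstep.2.1 hN (by rwa [card_insert_of_notMem hj]) hM'N)
termination_by ∑ x ∈ M, x

theorem reflTransGen_mayaStep_of_countLE {p n : ℕ} {M N : Finset ℕ} (hM : M ⊆ Icc p n)
    (hN : N ⊆ Icc p n) {k : ℕ} (hcard : #N = #M + 2 * k) (hMN : CountLE M N) :
    ReflTransGen (mayaStep p n) M N := by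
  induction k generalizing N with
  | zero => exact reflTransGen_mayaStep_of_card_eq hM hN hcard.symm hMN
  | succ k ih =>
    obtain ⟨a, b, T, hab, hTa, rfl⟩ := exists_eq_insert_insert_of_two_le_card (s := N) (by omega)
    have haT : a ∉ T := fun h => lt_irrefl a (hTa a h)
    have hbT : b ∉ T := fun h => lt_asymm hab (hTa b h)
    have habT : a ∉ insert b T := by simp [hab.ne, haT]
    rw [card_insert_of_notMem habT, card_insert_of_notMem hbT] at hcard
    have hpa : p ≤ a := (mem_Icc.1 (hN (mem_insert_self _ _))).1
    have hbn : b ≤ n := (mem_Icc.1 (hN (mem_insert_of_mem (mem_insert_self _ _)))).2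
    have hT : T ⊆ Icc p n := ((subset_insert _ _).trans (subset_insert _ _)).trans hN
    have hMT : CountLE M T := by
      rw [insert_comm] at hMN
      refine (hMN.of_insert_of_forall_lt (fun x hx => ?_) ?_).of_insert_of_forall_lt hTa (by omega)
      · rcases mem_insert.1 hx with rfl | hx
        exacts [hab, (hTa x hx).trans hab]
      · rw [card_insert_of_notMem haT]
        omega
    have hn1T : n - 1 ∉ T := fun h => absurd (hTa _ h) (by omega)
    have hnT : n ∉ T := fun h => absurd (hTa _ h) (by omega)
    have hn1nT : n - 1 ∉ insert n T := by
      simp only [mem_insert, not_or]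
      exact ⟨by omega, hn1T⟩
    have hedge := mayaM3_insert_insert hT (by omega) hn1T hnT
    refine ((ih hT (by omega) hMT).tail (Or.inr hedge)).trans
      (reflTransGen_mayaStep_of_card_eq hedge.2.1 hN ?_ ?_)
    · rw [card_insert_of_notMem hn1nT, card_insert_of_notMem hnT,
        card_insert_of_notMem habT, card_insert_of_notMem hbT]
    · exact countLE_insert_insert habT hbT hn1nT hnT (by omega) hbn

theorem exists_card_eq_add_two_mul_and_countLE_of_reflTransGen {p n : ℕ} (hp : 1 ≤ p)
    {M N : Finset ℕ} (h : ReflTransGen (mayaStep p n) M N) :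
    (∃ k, #N = #M + 2 * k) ∧ CountLE M N := by
  induction h with
  | refl => exact ⟨⟨0, rfl⟩, CountLE.refl _⟩
  | tail _ hstep ih =>
    obtain ⟨⟨k, hk⟩, hle⟩ := ih
    rcases hstep with h1 | h3
    · obtain ⟨j, T, hj, hj1, rfl, rfl⟩ := h1.exists_eq_insert
      rw [card_insert_of_notMem hj1] at hk
      exact ⟨⟨k, by rw [card_insert_of_notMem hj, hk]⟩,
        hle.trans (countLE_insert_of_le hj hj1 (Nat.le_succ j))⟩
    · exact ⟨⟨k + 1, by rw [h3.card_eq hp]; omega⟩, hle.trans (CountLE.of_subset h3.subset)⟩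

theorem maya_reachability_typeD_general (n p : ℕ) (hp : 1 ≤ p)
    (M N : Finset ℕ) (hM : M ⊆ Finset.Icc p n) (hN : N ⊆ Finset.Icc p n) :
    Relation.ReflTransGen (fun M N => mayaM1 p n M N ∨ mayaM3 p n M N) M N ↔
      ((∃ k : ℕ, N.card = M.card + 2 * k) ∧
        ∀ k < M.card, (N.sort (· ≤ ·)).getD k 0 ≤ (M.sort (· ≤ ·)).getD k 0) := by
  constructor
  · intro h
    obtain ⟨⟨k, hk⟩, hle⟩ := exists_card_eq_add_two_mul_and_countLE_of_reflTransGen (n := n) hp h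
    exact ⟨⟨k, hk⟩, (forall_sort_getD_le_iff_countLE (by omega) 0).2 hle⟩
  · rintro ⟨⟨k, hk⟩, hdom⟩
    exact reflTransGen_mayaStep_of_countLE hM hN hk
      ((forall_sort_getD_le_iff_countLE (by omega) 0).1 hdom)

/-- For the directed graph on subsets of the interval `J = [p,n] ⊆ [n]`
(with `n−1, n ∈ J`) with edges of types (M1) and (M3), and `M = {m_1 < ⋯ < m_r}`,
`N = {n_1 < ⋯ < n_s}`, there is a directed path from `M` to `N` if and only if
`s − r` is a nonnegative even integer and `m_ν ≥ n_ν` for all `ν ∈ [r]`. -/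
theorem maya_reachability_typeD (n p : ℕ) (hp : 1 ≤ p) (hpn : p ≤ n - 1)
    (M N : Finset ℕ) (hM : M ⊆ Finset.Icc p n) (hN : N ⊆ Finset.Icc p n) :
    Relation.ReflTransGen (fun M N => mayaM1 p n M N ∨ mayaM3 p n M N) M N ↔
      ((∃ k : ℕ, N.card = M.card + 2 * k) ∧
        ∀ k < M.card, (N.sort (· ≤ ·)).getD k 0 ≤ (M.sort (· ≤ ·)).getD k 0) :=
  maya_reachability_typeD_general n p hp M N hM hN
end

section
/- Let J = [1, q] ⊆ [n] be an interval containing 1 and 2 but not n, and define a directed graph on subsets of J with edges of type (M1) (there exists j with j ∈ N, j+1 ∈ M, M∖{j+1} = N∖{j}) and type (M4) (1, 2 ∈ M and N = M ∖ {1, 2}). Then for M = {m_1 < ⋯ < m_r} and N = {n_1 < ⋯ < n_s}, there is a directed path from M to N if and only if r − s is a nonnegative even integer and m_{r−ν} ≥ n_{s−ν} for all 0 ≤ ν ≤ s−1. Moreover, there is a directed path using only edges of type (M1) if and only if r = s and m_ν ≥ n_ν for all ν ∈ [r]. -/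
/-- Edge of type (M4) (quantum edge, `1, 2 ∈ J = [1,q]`):
`M → N` if `1, 2 ∈ M` and `N = M ∖ {1, 2}`. -/
def mayaM4 (q : ℕ) (M N : Finset ℕ) : Prop :=
  M ⊆ Finset.Icc 1 q ∧ N ⊆ Finset.Icc 1 q ∧
    1 ∈ M ∧ 2 ∈ M ∧ N = (M.erase 1).erase 2

open Finset Relation

theorem Relation.reflTransGen_of_exists_step {α : Type*} {r : α → α → Prop} {P : α → Prop}
    {b : α} (f : α → ℕ) (step : ∀ a, P a → a ≠ b → ∃ c, r a c ∧ P c ∧ f c < f a)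
    {a : α} (ha : P a) : ReflTransGen r a b := by
  induction a using (measure f).wf.induction with
  | _ a ih =>
    by_cases hab : a = b
    · exact hab ▸ .refl
    · obtain ⟨c, hac, hc, hfc⟩ := step a ha hab
      exact .head hac (ih c hfc hc)

def countGe (t : ℕ) (S : Finset ℕ) : ℕ := #{x ∈ S | t ≤ x}

def Dominates (M N : Finset ℕ) : Prop := ∀ t, countGe t N ≤ countGe t M

section countGe

variable {s t : ℕ} {S T : Finset ℕ}

lemma countGe_le_card : countGe t S ≤ #S := card_filter_le _ _

lemma countGe_anti (h : s ≤ t) : countGe t S ≤ countGe s S :=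
  card_le_card (monotone_filter_right S fun _ _ => h.trans)

lemma countGe_mono (h : S ⊆ T) : countGe t S ≤ countGe t T :=
  card_le_card (filter_subset_filter _ h)

lemma countGe_of_forall_le (h : ∀ x ∈ S, t ≤ x) : countGe t S = #S := by
  rw [countGe, filter_true_of_mem h]

lemma countGe_zero : countGe 0 S = #S := countGe_of_forall_le fun _ _ => Nat.zero_le _

lemma countGe_eq_succ_add (t : ℕ) (S : Finset ℕ) :
    countGe t S = countGe (t + 1) S + if t ∈ S then 1 else 0 := by
  rw [countGe, countGe, card_filter, card_filter, ← sum_ite_eq' S t (fun _ => 1),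
    ← sum_add_distrib]
  refine sum_congr rfl fun x _ => ?_
  split_ifs <;> omega

lemma countGe_insert (hs : s ∉ S) :
    countGe t (insert s S) = countGe t S + if t ≤ s then 1 else 0 := by
  rw [countGe, countGe, card_filter, card_filter, sum_insert hs, add_comm]

lemma countGe_erase_add (hs : s ∈ S) :
    countGe t (S.erase s) + (if t ≤ s then 1 else 0) = countGe t S := by
  rw [countGe, countGe, card_filter, card_filter, sum_erase_add _ _ hs]

lemma eq_of_forall_countGe_eq (h : ∀ t, countGe t S = countGe t T) : S = T := by
  ext x
  have hS := countGe_eq_succ_add x S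
  have hT := countGe_eq_succ_add x T
  rw [h, h] at hS
  split_ifs at hS hT <;> simp_all

lemma le_iff_countGe_le (hs : s ∈ S) : t ≤ s ↔ countGe s S ≤ countGe t S := by
  refine ⟨countGe_anti, fun h => ?_⟩
  by_contra! hst
  have := countGe_anti (S := S) (show s + 1 ≤ t from hst)
  have := countGe_eq_succ_add s S
  rw [if_pos hs] at this
  omega

end countGe

section sort

variable {S : Finset ℕ}

lemma countGe_orderEmbOfFin (i : Fin #S) : countGe (S.orderEmbOfFin rfl i) S = #S - i := by
  have : {x ∈ S | S.orderEmbOfFin rfl i ≤ x} = (Ici i).map (S.orderEmbOfFin rfl).toEmbedding := by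
    ext x
    simp only [mem_map, mem_Ici, mem_filter, RelEmbedding.coe_toEmbedding]
    constructor
    · rintro ⟨hx, hix⟩
      obtain ⟨j, rfl⟩ : x ∈ Set.range (S.orderEmbOfFin rfl) := by simpa using hx
      exact ⟨j, by simpa using hix, rfl⟩
    · rintro ⟨j, hij, rfl⟩
      exact ⟨orderEmbOfFin_mem _ _ _, by simpa using hij⟩
  rw [countGe, this, card_map, Fin.card_Ici]

lemma le_sort_getD_iff {ν : ℕ} (hν : ν < #S) (t : ℕ) :
    t ≤ (S.sort (· ≤ ·)).getD (#S - 1 - ν) 0 ↔ ν < countGe t S := by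
  have hi : #S - 1 - ν < #S := by omega
  have hget : (S.sort (· ≤ ·)).getD (#S - 1 - ν) 0 = S.orderEmbOfFin rfl ⟨_, hi⟩ := by
    rw [List.getD_eq_getElem _ _ (by simpa)]
    rfl
  rw [hget, le_iff_countGe_le (orderEmbOfFin_mem _ _ _), countGe_orderEmbOfFin, Fin.val_mk]
  omega

lemma dominates_iff_sort {M N : Finset ℕ} (hle : #N ≤ #M) :
    Dominates M N ↔ ∀ ν < #N,
      (N.sort (· ≤ ·)).getD (#N - 1 - ν) 0 ≤ (M.sort (· ≤ ·)).getD (#M - 1 - ν) 0 := by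
  constructor
  · intro hMN ν hν
    exact (le_sort_getD_iff (by omega) _).2
      (((le_sort_getD_iff hν _).1 le_rfl).trans_le (hMN _))
  · intro h t
    by_contra! hlt
    have hν : countGe t M < #N := hlt.trans_le countGe_le_card
    exact (lt_irrefl _) ((le_sort_getD_iff (by omega) t).1
      (((le_sort_getD_iff hν t).2 hlt).trans (h _ hν)))

lemma forall_sort_getD_rev_le_iff {M N : Finset ℕ} (hcard : #M = #N) :
    (∀ ν < #N,
      (N.sort (· ≤ ·)).getD (#N - 1 - ν) 0 ≤ (M.sort (· ≤ ·)).getD (#M - 1 - ν) 0) ↔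
    ∀ k < #M, (N.sort (· ≤ ·)).getD k 0 ≤ (M.sort (· ≤ ·)).getD k 0 := by
  rw [hcard]
  constructor
  · intro h k hk
    simpa [show #N - 1 - (#N - 1 - k) = k by omega] using h (#N - 1 - k) (by omega)
  · exact fun h ν hν => h _ (by omega)

end sort

def moveDown (M : Finset ℕ) (j : ℕ) : Finset ℕ := insert j (M.erase (j + 1))

section moveDown

variable {p q j t : ℕ} {M N : Finset ℕ}

lemma notMem_erase_succ (hj : j ∉ M) : j ∉ M.erase (j + 1) :=
  fun h => hj (mem_of_mem_erase h)

lemma card_moveDown (hj : j ∉ M) (hj1 : j + 1 ∈ M) : #(moveDown M j) = #M := by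
  rw [moveDown, card_insert_of_notMem (notMem_erase_succ hj), card_erase_add_one hj1]

lemma sum_moveDown (hj : j ∉ M) (hj1 : j + 1 ∈ M) :
    ∑ x ∈ moveDown M j, x + 1 = ∑ x ∈ M, x := by
  rw [moveDown, sum_insert (notMem_erase_succ hj), ← sum_erase_add _ _ hj1]
  ring

lemma countGe_moveDown_add (hj : j ∉ M) (hj1 : j + 1 ∈ M) :
    countGe t (moveDown M j) + (if t = j + 1 then 1 else 0) = countGe t M := by
  rw [← countGe_erase_add hj1, moveDown, countGe_insert (notMem_erase_succ hj)]
  split_ifs <;> omega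

lemma mayaM1_moveDown (hM : M ⊆ Icc p q) (hpj : p ≤ j) (hj : j ∉ M) (hj1 : j + 1 ∈ M) :
    mayaM1 p q M (moveDown M j) := by
  have hjq : j + 1 ≤ q := (mem_Icc.1 (hM hj1)).2
  refine ⟨hM, insert_subset (mem_Icc.2 ⟨hpj, by omega⟩) ((erase_subset _ _).trans hM), j,
    mem_insert_self _ _, hj1, ?_⟩
  rw [moveDown, erase_insert (notMem_erase_succ hj)]

lemma mayaM1.exists_eq_moveDown (h : mayaM1 p q M N) :
    ∃ j, j ∉ M ∧ j + 1 ∈ M ∧ N = moveDown M j := by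
  obtain ⟨-, -, j, hjN, hj1, heq⟩ := h
  have hj : j ∉ M := fun hjM => notMem_erase j N (heq ▸ mem_erase.2 ⟨by omega, hjM⟩)
  exact ⟨j, hj, hj1, by rw [moveDown, heq, insert_erase hjN]⟩

lemma dominates_moveDown (hj : j ∉ M) (hj1 : j + 1 ∈ M) : Dominates M (moveDown M j) :=
  fun t => by have := countGe_moveDown_add (t := t) hj hj1; omega

lemma Dominates.moveDown (hMN : Dominates M N) (hj : j ∉ M) (hj1 : j + 1 ∈ M)
    (hlt : countGe (j + 1) N < countGe (j + 1) M) : Dominates (moveDown M j) N := by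
  intro t
  have := countGe_moveDown_add (t := t) hj hj1
  have := hMN t
  split_ifs at * <;> subst_vars <;> omega

end moveDown

section mayaM4

variable {q : ℕ} {M N : Finset ℕ}

lemma two_mem_erase_one (h2 : 2 ∈ M) : 2 ∈ M.erase 1 := mem_erase.2 ⟨by omega, h2⟩

lemma mayaM4.card_eq (h : mayaM4 q M N) : #M = #N + 2 := by
  obtain ⟨-, -, h1, h2, rfl⟩ := h
  rw [← card_erase_add_one h1, ← card_erase_add_one (two_mem_erase_one h2)]

lemma mayaM4.dominates (h : mayaM4 q M N) : Dominates M N := by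
  obtain ⟨-, -, -, -, rfl⟩ := h
  exact fun t => countGe_mono ((erase_subset _ _).trans (erase_subset _ _))

lemma Dominates.erase_one_two (hMN : Dominates M N) (h0 : 0 ∉ M) (h1 : 1 ∈ M) (h2 : 2 ∈ M)
    (hcard : #N ≤ #((M.erase 1).erase 2)) : Dominates ((M.erase 1).erase 2) N := by
  intro t
  by_cases ht : t ≤ 3
  · have hge : ∀ x ∈ (M.erase 1).erase 2, t ≤ x := fun x hx => by
      simp only [mem_erase] at hx
      have : x ≠ 0 := fun h => h0 (h ▸ hx.2.2)
      omega
    rw [countGe_of_forall_le hge]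
    exact countGe_le_card.trans hcard
  · have e1 := countGe_erase_add (t := t) (two_mem_erase_one h2)
    have e2 := countGe_erase_add (t := t) h1
    have := hMN t
    simp only [show ¬t ≤ 2 by omega, show ¬t ≤ 1 by omega, if_false] at e1 e2
    omega

end mayaM4

section forward

variable {q : ℕ} {M N : Finset ℕ}

lemma mayaM1.card_eq {p : ℕ} (h : mayaM1 p q M N) : #N = #M := by
  obtain ⟨j, hj, hj1, rfl⟩ := h.exists_eq_moveDown
  exact card_moveDown hj hj1

lemma mayaM1.dominates {p : ℕ} (h : mayaM1 p q M N) : Dominates M N := by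
  obtain ⟨j, hj, hj1, rfl⟩ := h.exists_eq_moveDown
  exact dominates_moveDown hj hj1

lemma Dominates.trans {L : Finset ℕ} (hLM : Dominates L M) (hMN : Dominates M N) :
    Dominates L N :=
  fun t => (hMN t).trans (hLM t)

lemma card_eq_and_dominates_of_reflTransGen {p : ℕ}
    (h : ReflTransGen (mayaM1 p q) M N) : #M = #N ∧ Dominates M N := by
  induction h with
  | refl => exact ⟨rfl, fun _ => le_rfl⟩
  | tail _ hedge ih => exact ⟨ih.1.trans hedge.card_eq.symm, ih.2.trans hedge.dominates⟩

lemma card_eq_add_two_mul_and_dominates_of_reflTransGen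
    (h : ReflTransGen (fun M N => mayaM1 1 q M N ∨ mayaM4 q M N) M N) :
    (∃ k, #M = #N + 2 * k) ∧ Dominates M N := by
  induction h with
  | refl => exact ⟨⟨0, rfl⟩, fun _ => le_rfl⟩
  | tail _ hedge ih =>
    obtain ⟨⟨k, hk⟩, hdom⟩ := ih
    rcases hedge with h1 | h4
    · exact ⟨⟨k, by rw [hk, h1.card_eq]⟩, hdom.trans h1.dominates⟩
    · exact ⟨⟨k + 1, by rw [hk, h4.card_eq]; ring⟩, hdom.trans h4.dominates⟩

end forward

section backward

variable {q : ℕ} {M N : Finset ℕ}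

lemma exists_moveDown_of_countGe_lt {c : ℕ} (hc : c ∉ M)
    (hlt : countGe (c + 1) N < countGe (c + 1) M) :
    ∃ j, c ≤ j ∧ j ∉ M ∧ j + 1 ∈ M ∧ countGe (j + 1) N < countGe (j + 1) M := by
  have hex : ∃ j, c ≤ j ∧ j + 1 ∈ M := by
    obtain ⟨x, hx⟩ := card_pos.1 (hlt.trans_le' (Nat.zero_le _))
    rw [mem_filter] at hx
    exact ⟨x - 1, by omega, by rw [Nat.sub_add_cancel (by omega)]; exact hx.1⟩
  obtain ⟨hcj, hj1⟩ := Nat.find_spec hex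
  have hmin : ∀ x ∈ M, c + 1 ≤ x → Nat.find hex + 1 ≤ x := fun x hx hcx => by
    have := Nat.find_min' hex (m := x - 1) ⟨by omega, by rwa [Nat.sub_add_cancel (by omega)]⟩
    omega
  refine ⟨Nat.find hex, hcj, fun hj => ?_, hj1, ?_⟩
  · rcases hcj.eq_or_lt with h | h
    · exact hc (h ▸ hj)
    · have := hmin _ hj h
      omega
  · calc countGe (Nat.find hex + 1) N ≤ countGe (c + 1) N := countGe_anti (by omega)
      _ < countGe (c + 1) M := hlt
      _ ≤ countGe (Nat.find hex + 1) M :=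
        card_le_card (monotone_filter_right M hmin)

lemma zero_notMem_of_subset_Icc_one (hM : M ⊆ Icc 1 q) : 0 ∉ M :=
  fun h => by simpa using hM h

lemma exists_countGe_lt_of_card_eq (hMN : Dominates M N) (hne : M ≠ N) (hcard : #M = #N)
    (hM0 : 0 ∉ M) (hN0 : 0 ∉ N) :
    ∃ c, 1 ≤ c ∧ c ∉ M ∧ countGe (c + 1) N < countGe (c + 1) M := by
  -- `c + 1` is the least `t` with `countGe t N < countGe t M`; equality at `c` forces `c ∉ M`.
  have hex : ∃ t, countGe t N < countGe t M := by
    by_contra! h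
    exact hne (eq_of_forall_countGe_eq fun t => le_antisymm (h t) (hMN t))
  have h0 : countGe 0 M = countGe 0 N := by rw [countGe_zero, countGe_zero, hcard]
  have h1 : countGe 1 M = countGe 1 N := by
    have hM1 : countGe 0 M = countGe 1 M + _ := countGe_eq_succ_add 0 M
    have hN1 : countGe 0 N = countGe 1 N + _ := countGe_eq_succ_add 0 N
    rw [if_neg hM0] at hM1
    rw [if_neg hN0] at hN1
    omega
  have hb := Nat.find_spec hex
  have hc := Nat.find_min hex (m := Nat.find hex - 1)
  have hb2 : 2 ≤ Nat.find hex := by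
    by_contra! h
    interval_cases Nat.find hex <;> omega
  refine ⟨Nat.find hex - 1, by omega, fun hcM => ?_, by rwa [Nat.sub_add_cancel (by omega)]⟩
  have hMc := countGe_eq_succ_add (Nat.find hex - 1) M
  have hNc := countGe_eq_succ_add (Nat.find hex - 1) N
  rw [Nat.sub_add_cancel (by omega)] at hMc hNc
  have := hMN (Nat.find hex - 1)
  split_ifs at hMc hNc <;> omega

lemma exists_countGe_lt_of_card_lt (hM0 : 0 ∉ M) (h12 : ¬(1 ∈ M ∧ 2 ∈ M))
    (hcard : #N + 2 ≤ #M) : ∃ c, 1 ≤ c ∧ c ∉ M ∧ countGe (c + 1) N < countGe (c + 1) M := by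
  have e0 : countGe 0 M = countGe 1 M + _ := countGe_eq_succ_add 0 M
  have e1 : countGe 1 M = countGe 2 M + _ := countGe_eq_succ_add 1 M
  have e2 : countGe 2 M = countGe 3 M + _ := countGe_eq_succ_add 2 M
  rw [countGe_zero, if_neg hM0] at e0
  by_cases h1 : 1 ∈ M
  · have h2 : 2 ∉ M := fun h2 => h12 ⟨h1, h2⟩
    rw [if_pos h1] at e1
    rw [if_neg h2] at e2
    have := countGe_le_card (t := 3) (S := N)
    exact ⟨2, by omega, h2, show countGe 3 N < countGe 3 M by omega⟩
  · rw [if_neg h1] at e1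
    have := countGe_le_card (t := 2) (S := N)
    exact ⟨1, le_rfl, h1, show countGe 2 N < countGe 2 M by omega⟩

lemma exists_mayaM1_step (hM : M ⊆ Icc 1 q) (hMN : Dominates M N) {c : ℕ} (hc1 : 1 ≤ c)
    (hc : c ∉ M) (hlt : countGe (c + 1) N < countGe (c + 1) M) :
    ∃ M', mayaM1 1 q M M' ∧ #M' = #M ∧ Dominates M' N ∧ ∑ x ∈ M', x < ∑ x ∈ M, x := by
  obtain ⟨j, hcj, hj, hj1, hjlt⟩ := exists_moveDown_of_countGe_lt hc hlt
  exact ⟨moveDown M j, mayaM1_moveDown hM (hc1.trans hcj) hj hj1, card_moveDown hj hj1,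
    hMN.moveDown hj hj1 hjlt, by have := sum_moveDown hj hj1; omega⟩

lemma reflTransGen_mayaM1_of_dominates (hM : M ⊆ Icc 1 q) (hN : N ⊆ Icc 1 q)
    (hcard : #M = #N) (hMN : Dominates M N) : ReflTransGen (mayaM1 1 q) M N := by
  refine reflTransGen_of_exists_step (P := fun M => M ⊆ Icc 1 q ∧ #M = #N ∧ Dominates M N)
    (fun M => ∑ x ∈ M, x) (fun M ⟨hM, hcard, hMN⟩ hne => ?_) ⟨hM, hcard, hMN⟩
  obtain ⟨c, hc1, hc, hlt⟩ := exists_countGe_lt_of_card_eq hMN hne hcard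
    (zero_notMem_of_subset_Icc_one hM) (zero_notMem_of_subset_Icc_one hN)
  obtain ⟨M', hedge, hcard', hMN', hsum⟩ := exists_mayaM1_step hM hMN hc1 hc hlt
  exact ⟨M', hedge, ⟨hedge.2.1, hcard'.trans hcard, hMN'⟩, hsum⟩

lemma sum_erase_one_two_add (h1 : 1 ∈ M) (h2 : 2 ∈ M) :
    ∑ x ∈ (M.erase 1).erase 2, x + 3 = ∑ x ∈ M, x := by
  rw [← sum_erase_add _ _ h1, ← sum_erase_add _ _ (two_mem_erase_one h2), add_assoc]

lemma reflTransGen_maya_of_dominates (hM : M ⊆ Icc 1 q) (hN : N ⊆ Icc 1 q)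
    (hcard : ∃ k, #M = #N + 2 * k) (hMN : Dominates M N) :
    ReflTransGen (fun M N => mayaM1 1 q M N ∨ mayaM4 q M N) M N := by
  refine reflTransGen_of_exists_step
    (P := fun M => M ⊆ Icc 1 q ∧ (∃ k, #M = #N + 2 * k) ∧ Dominates M N)
    (fun M => ∑ x ∈ M, x) (fun M ⟨hM, ⟨k, hk⟩, hMN⟩ hne => ?_) ⟨hM, hcard, hMN⟩
  have hM0 := zero_notMem_of_subset_Icc_one hM
  obtain rfl | hk0 := k.eq_zero_or_pos
  · obtain ⟨c, hc1, hc, hlt⟩ := exists_countGe_lt_of_card_eq hMN hne hk hM0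
      (zero_notMem_of_subset_Icc_one hN)
    obtain ⟨M', hedge, hcard', hMN', hsum⟩ := exists_mayaM1_step hM hMN hc1 hc hlt
    exact ⟨M', .inl hedge, ⟨hedge.2.1, ⟨0, hcard'.trans hk⟩, hMN'⟩, hsum⟩
  by_cases h12 : 1 ∈ M ∧ 2 ∈ M
  · have hedge : mayaM4 q M ((M.erase 1).erase 2) :=
      ⟨hM, (erase_subset _ _).trans ((erase_subset _ _).trans hM), h12.1, h12.2, rfl⟩
    have hcard' := hedge.card_eq
    refine ⟨_, .inr hedge, ⟨hedge.2.1, ⟨k - 1, by omega⟩,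
      hMN.erase_one_two hM0 h12.1 h12.2 (by omega)⟩, ?_⟩
    have := sum_erase_one_two_add h12.1 h12.2
    omega
  · obtain ⟨c, hc1, hc, hlt⟩ := exists_countGe_lt_of_card_lt (N := N) hM0 h12 (by omega)
    obtain ⟨M', hedge, hcard', hMN', hsum⟩ := exists_mayaM1_step hM hMN hc1 hc hlt
    exact ⟨M', .inl hedge, ⟨hedge.2.1, ⟨k, hcard'.trans hk⟩, hMN'⟩, hsum⟩

end backward

theorem maya_reachability_quantum_general (q : ℕ)
    (M N : Finset ℕ) (hM : M ⊆ Finset.Icc 1 q) (hN : N ⊆ Finset.Icc 1 q) :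
    (Relation.ReflTransGen (fun M N => mayaM1 1 q M N ∨ mayaM4 q M N) M N ↔
      ((∃ k : ℕ, M.card = N.card + 2 * k) ∧
        ∀ ν < N.card,
          (N.sort (· ≤ ·)).getD (N.card - 1 - ν) 0 ≤
            (M.sort (· ≤ ·)).getD (M.card - 1 - ν) 0)) ∧
    (Relation.ReflTransGen (mayaM1 1 q) M N ↔
      (M.card = N.card ∧
        ∀ k < M.card, (N.sort (· ≤ ·)).getD k 0 ≤ (M.sort (· ≤ ·)).getD k 0)) := by
  refine ⟨⟨fun h => ?_, fun ⟨⟨k, hk⟩, hsort⟩ => ?_⟩, ⟨fun h => ?_, fun ⟨hcard, hsort⟩ => ?_⟩⟩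
  · obtain ⟨⟨k, hk⟩, hMN⟩ := card_eq_add_two_mul_and_dominates_of_reflTransGen h
    exact ⟨⟨k, hk⟩, (dominates_iff_sort (by omega)).1 hMN⟩
  · exact reflTransGen_maya_of_dominates hM hN ⟨k, hk⟩ ((dominates_iff_sort (by omega)).2 hsort)
  · obtain ⟨hcard, hMN⟩ := card_eq_and_dominates_of_reflTransGen h
    exact ⟨hcard, (forall_sort_getD_rev_le_iff hcard).1 ((dominates_iff_sort hcard.ge).1 hMN)⟩
  · exact reflTransGen_mayaM1_of_dominates hM hN hcard
      ((dominates_iff_sort hcard.ge).2 ((forall_sort_getD_rev_le_iff hcard).2 hsort))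

/-- For the directed graph on subsets of the interval `J = [1,q] ⊆ [n]`
(containing `1` and `2` but not `n`) with edges of types (M1) and (M4), and
`M = {m_1 < ⋯ < m_r}`, `N = {n_1 < ⋯ < n_s}`:
(a) there is a directed path from `M` to `N` if and only if `r − s` is a nonnegative even
integer and `m_{r−ν} ≥ n_{s−ν}` for all `0 ≤ ν ≤ s−1`; and
(b) there is a directed path using only edges of type (M1) if and only if `r = s` and
`m_ν ≥ n_ν` for all `ν ∈ [r]`. -/
theorem maya_reachability_quantum (n q : ℕ) (hq1 : 2 ≤ q) (hq2 : q < n)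
    (M N : Finset ℕ) (hM : M ⊆ Finset.Icc 1 q) (hN : N ⊆ Finset.Icc 1 q) :
    (Relation.ReflTransGen (fun M N => mayaM1 1 q M N ∨ mayaM4 q M N) M N ↔
      ((∃ k : ℕ, M.card = N.card + 2 * k) ∧
        ∀ ν < N.card,
          (N.sort (· ≤ ·)).getD (N.card - 1 - ν) 0 ≤
            (M.sort (· ≤ ·)).getD (M.card - 1 - ν) 0)) ∧
    (Relation.ReflTransGen (mayaM1 1 q) M N ↔
      (M.card = N.card ∧
        ∀ k < M.card, (N.sort (· ≤ ·)).getD k 0 ≤ (M.sort (· ≤ ·)).getD k 0)) :=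
  maya_reachability_quantum_general q M N hM hN
end
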